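/- In any model H of HST, the class I of all internal sets of H, equipped with the relations ∈ and st of H, is a model of BST (bounded set theory). -/

import Mathlib

/-!
Semantic framework for models of Hrbaček set theory (HST) in the ∈-st-language,
following Kanovei–Reeken, "Isomorphism property in nonstandard extensions of the
ZFC universe".

A model is a type `M` together with a membership relation `mem : M → M → Prop`
and a standardness predicate `stP : M → Prop`.  Formulas of the ∈-st-language
are deeply embedded (`StFormula`), so that axiom schemata can be stated.
All set-theoretic notions (pairs, functions, ordinals, ...) are expressed
relative to a class `C : M → Prop`, which also yields relativizations
(to the standard universe, the internal universe, inner classes, etc.).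
-/

universe u v

namespace HSTF

variable {M : Type u}

def TrueC {M : Type u} : M → Prop := fun _ => True
def FalseC {M : Type u} : M → Prop := fun _ => False

/-! ### Formulas of the ∈-st-language -/

inductive StFormula : ℕ → Type where
  | mem {n} (i j : Fin n) : StFormula n
  | eq {n} (i j : Fin n) : StFormula n
  | st {n} (i : Fin n) : StFormula n
  | not {n} (φ : StFormula n) : StFormula n
  | and {n} (φ ψ : StFormula n) : StFormula n
  | all {n} (φ : StFormula (n + 1)) : StFormula n

/-- ∈-formulas: formulas in which the standardness predicate does not occur. -/
def StFormula.IsEpsilon : ∀ {n}, StFormula n → Prop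
  | _, .mem _ _ => True
  | _, .eq _ _ => True
  | _, .st _ => False
  | _, .not φ => φ.IsEpsilon
  | _, .and φ ψ => φ.IsEpsilon ∧ ψ.IsEpsilon
  | _, .all φ => φ.IsEpsilon

/-- Evaluation of a formula in `(M, mem, stP)`, with all quantifiers
relativized to the class `C`. -/
def EvalIn (mem : M → M → Prop) (stP : M → Prop) (C : M → Prop) :
    ∀ {n}, StFormula n → (Fin n → M) → Prop
  | _, .mem i j, val => mem (val i) (val j)
  | _, .eq i j, val => val i = val j
  | _, .st i, val => stP (val i)
  | _, .not φ, val => ¬ EvalIn mem stP C φ val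
  | _, .and φ ψ, val => EvalIn mem stP C φ val ∧ EvalIn mem stP C ψ val
  | _, .all φ, val => ∀ x, C x → EvalIn mem stP C φ (Fin.snoc val x)

/-! ### Set-theoretic coding, relative to a class `C` -/

section Coding
variable (mem : M → M → Prop) (C : M → Prop)

def EmptyIn (e : M) : Prop := ∀ z, C z → ¬ mem z e

def SingIn (s x : M) : Prop := ∀ z, C z → (mem z s ↔ z = x)

def UPairIn (p x y : M) : Prop := ∀ z, C z → (mem z p ↔ (z = x ∨ z = y))

/-- `p` is the Kuratowski ordered pair `⟨x, y⟩`, relative to `C`. -/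
def OPairIn (p x y : M) : Prop :=
  ∃ s t, C s ∧ C t ∧ SingIn mem C s x ∧ UPairIn mem C t x y ∧ UPairIn mem C p s t

/-- `f(x) = y` for a set-coded function `f` (a set of ordered pairs). -/
def FValIn (f x y : M) : Prop := ∃ p, C p ∧ mem p f ∧ OPairIn mem C p x y

/-- `f` is a (set-coded) function with domain exactly the class `D`. -/
def FuncOnIn (f : M) (D : M → Prop) : Prop :=
  (∀ p, C p → mem p f → ∃ x y, C x ∧ C y ∧ D x ∧ OPairIn mem C p x y) ∧
  (∀ x, C x → D x → ∃ y, C y ∧ FValIn mem C f x y) ∧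
  (∀ x y y', C x → C y → C y' → FValIn mem C f x y → FValIn mem C f x y' → y = y')

def SubIn (x y : M) : Prop := ∀ z, C z → mem z x → mem z y

def TransIn (x : M) : Prop := ∀ y, C y → mem y x → ∀ z, C z → mem z y → mem z x

/-- `s = x ∪ {x}`. -/
def SuccIn (s x : M) : Prop := ∀ z, C z → (mem z s ↔ (mem z x ∨ z = x))

/-- `∈` restricted to `x` is well-founded (in the sense of the model):
every nonempty subset (of the model, in `C`) of `x` has an `∈`-minimal element. -/
def WFIn (x : M) : Prop :=
  ∀ Y, C Y → SubIn mem C Y x → (∃ w, C w ∧ mem w Y) →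
    ∃ w, C w ∧ mem w Y ∧ ∀ u, C u → mem u w → ¬ mem u Y

/-- `x` is an ordinal: a transitive set well-ordered by `∈` (relative to `C`). -/
def OrdIn (x : M) : Prop :=
  TransIn mem C x ∧
  (∀ y z, C y → C z → mem y x → mem z x → (mem y z ∨ y = z ∨ mem z y)) ∧
  (∀ y z w, C y → C z → C w → mem y x → mem z x → mem w x → mem y z → mem z w → mem y w) ∧
  (∀ y, C y → mem y x → ¬ mem y y) ∧
  WFIn mem C x

/-- `x` is a natural number: an ordinal such that every ordinal `≤ x`
is zero or a successor. -/
def NatIn (x : M) : Prop :=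
  OrdIn mem C x ∧ ∀ y, C y → (y = x ∨ mem y x) →
    (EmptyIn mem C y ∨ ∃ z, C z ∧ SuccIn mem C y z)

/-- `x` and `y` are equinumerous via a (set-coded) bijection, relative to `C`. -/
def EquinumIn (x y : M) : Prop :=
  ∃ f, C f ∧ FuncOnIn mem C f (fun z => mem z x) ∧
    (∀ a b w, C a → C b → C w → FValIn mem C f a w → FValIn mem C f b w → a = b) ∧
    (∀ w, C w → (mem w y ↔ ∃ a, C a ∧ mem a x ∧ FValIn mem C f a w))

def FiniteIn (x : M) : Prop := ∃ n, C n ∧ NatIn mem C n ∧ EquinumIn mem C x n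

/-- `x` is a cardinal: an ordinal not equinumerous to any smaller ordinal. -/
def CardinalIn (x : M) : Prop :=
  OrdIn mem C x ∧ ∀ y, C y → mem y x → ¬ EquinumIn mem C x y

/-- The set `r` (of ordered pairs) well-orders the set `x`, relative to `C`. -/
def WOrdersIn (r x : M) : Prop :=
  (∀ a b, C a → C b → mem a x → mem b x → a ≠ b →
    ((∃ p, C p ∧ mem p r ∧ OPairIn mem C p a b) ∨ (∃ p, C p ∧ mem p r ∧ OPairIn mem C p b a))) ∧
  (∀ a, C a → mem a x → ¬ ∃ p, C p ∧ mem p r ∧ OPairIn mem C p a a) ∧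
  (∀ a b c, C a → C b → C c →
    (∃ p, C p ∧ mem p r ∧ OPairIn mem C p a b) → (∃ p, C p ∧ mem p r ∧ OPairIn mem C p b c) →
    (∃ p, C p ∧ mem p r ∧ OPairIn mem C p a c)) ∧
  (∀ Y, C Y → SubIn mem C Y x → (∃ w, C w ∧ mem w Y) →
    ∃ a, C a ∧ mem a Y ∧ ∀ b, C b → mem b Y → b ≠ a → ∃ p, C p ∧ mem p r ∧ OPairIn mem C p a b)

def WOableIn (x : M) : Prop := ∃ r, C r ∧ WOrdersIn mem C r x

end Coding

/-! ### ZFC, relativized to a class -/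

/-- The class `C` of `(M, mem)` is a model of ZFC (with the Separation and
Collection schemata for ∈-formulas, and Choice in the form of the
well-ordering principle). -/
structure ZFCModelIn (mem : M → M → Prop) (C : M → Prop) : Prop where
  nonemp : ∃ x, C x
  ext : ∀ x y, C x → C y → (∀ z, C z → (mem z x ↔ mem z y)) → x = y
  pair : ∀ x y, C x → C y → ∃ p, C p ∧ UPairIn mem C p x y
  union : ∀ x, C x → ∃ u, C u ∧ ∀ z, C z → (mem z u ↔ ∃ y, C y ∧ mem y x ∧ mem z y)
  power : ∀ x, C x → ∃ pw, C pw ∧ ∀ z, C z → (mem z pw ↔ SubIn mem C z x)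
  infinity : ∃ w, C w ∧ (∃ e, C e ∧ mem e w ∧ EmptyIn mem C e) ∧
    ∀ x, C x → mem x w → ∃ s, C s ∧ mem s w ∧ SuccIn mem C s x
  foundation : ∀ x, C x → (∃ y, C y ∧ mem y x) →
    ∃ y, C y ∧ mem y x ∧ ∀ z, C z → mem z y → ¬ mem z x
  separation : ∀ {n} (φ : StFormula (n + 1)), φ.IsEpsilon →
    ∀ val : Fin n → M, (∀ i, C (val i)) → ∀ x, C x →
      ∃ s, C s ∧ ∀ z, C z → (mem z s ↔ mem z x ∧ EvalIn mem FalseC C φ (Fin.snoc val z))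
  collection : ∀ {n} (φ : StFormula (n + 2)), φ.IsEpsilon →
    ∀ val : Fin n → M, (∀ i, C (val i)) → ∀ x, C x →
      ∃ B, C B ∧ ∀ a, C a → mem a x →
        (∃ b, C b ∧ EvalIn mem FalseC C φ (Fin.snoc (Fin.snoc val a) b)) →
        ∃ b, C b ∧ mem b B ∧ EvalIn mem FalseC C φ (Fin.snoc (Fin.snoc val a) b)
  choice_wo : ∀ x, C x → ∃ r, C r ∧ WOrdersIn mem C r x

/-! ### HST -/

/-- `x` is internal: a member of some standard set. -/
def Internal (mem : M → M → Prop) (stP : M → Prop) (x : M) : Prop := ∃ y, stP y ∧ mem x y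

/-- `x` is a set of standard size: the image of `σS = {z ∈ S : st z}`
(for some standard `S`) under some (set-coded) function. -/
def SSize (mem : M → M → Prop) (stP : M → Prop) (x : M) : Prop :=
  ∃ S f, stP S ∧ FuncOnIn mem TrueC f (fun z => stP z ∧ mem z S) ∧
    ∀ y, mem y x ↔ ∃ a, stP a ∧ mem a S ∧ FValIn mem TrueC f a y

/-- `(M, mem, stP)` is a model of Hrbaček set theory HST. -/
structure HSTModel (mem : M → M → Prop) (stP : M → Prop) : Prop where
  /-- 1a: the standard universe models ZFC (the relativization `Φ^st` of every
  ZFC axiom `Φ`). -/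
  zfc_st : ZFCModelIn mem stP
  /-- 1b: Transfer for ∈-formulas with standard parameters, between the
  standard and the internal universe. -/
  transfer : ∀ {n} (φ : StFormula (n + 1)), φ.IsEpsilon →
    ∀ val : Fin n → M, (∀ i, stP (val i)) →
      ((∃ x, Internal mem stP x ∧ EvalIn mem FalseC (Internal mem stP) φ (Fin.snoc val x)) ↔
       (∃ x, stP x ∧ EvalIn mem FalseC (Internal mem stP) φ (Fin.snoc val x)))
  /-- 1c: elements of internal sets are internal. -/
  internal_trans : ∀ x y, Internal mem stP x → mem y x → Internal mem stP y
  /-- 2: Standardization. -/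
  standardization : ∀ X, ∃ Y, stP Y ∧ ∀ z, stP z → (mem z Y ↔ mem z X)
  /-- 3: Extensionality. -/
  ext : ∀ x y, (∀ z, mem z x ↔ mem z y) → x = y
  /-- 3: Pairing. -/
  pairing : ∀ x y, ∃ p, UPairIn mem TrueC p x y
  /-- 3: Union. -/
  union : ∀ x, ∃ u, ∀ z, mem z u ↔ ∃ y, mem y x ∧ mem z y
  /-- 3: Infinity. -/
  infinity : ∃ w, (∃ e, mem e w ∧ EmptyIn mem TrueC e) ∧
    ∀ x, mem x w → ∃ s, mem s w ∧ SuccIn mem TrueC s x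
  /-- 3: Separation for all ∈-st-formulas. -/
  separation : ∀ {n} (φ : StFormula (n + 1)) (val : Fin n → M) (x : M),
    ∃ s, ∀ z, mem z s ↔ (mem z x ∧ EvalIn mem stP TrueC φ (Fin.snoc val z))
  /-- 3: Collection for all ∈-st-formulas. -/
  collection : ∀ {n} (φ : StFormula (n + 2)) (val : Fin n → M) (x : M),
    ∃ B, ∀ a, mem a x → (∃ b, EvalIn mem stP TrueC φ (Fin.snoc (Fin.snoc val a) b)) →
      ∃ b, mem b B ∧ EvalIn mem stP TrueC φ (Fin.snoc (Fin.snoc val a) b)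
  /-- 3: Replacement for all ∈-st-formulas. -/
  replacement : ∀ {n} (φ : StFormula (n + 2)) (val : Fin n → M) (x : M),
    (∀ a b b', EvalIn mem stP TrueC φ (Fin.snoc (Fin.snoc val a) b) →
      EvalIn mem stP TrueC φ (Fin.snoc (Fin.snoc val a) b') → b = b') →
    ∃ B, ∀ b, mem b B ↔ ∃ a, mem a x ∧ EvalIn mem stP TrueC φ (Fin.snoc (Fin.snoc val a) b)
  /-- 4: Weak Regularity. -/
  weak_reg : ∀ X, (∃ x, mem x X) →
    ∃ x, mem x X ∧ ∀ y, mem y x → mem y X → Internal mem stP y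
  /-- 5: Saturation for standard size families of internal sets. -/
  saturation : ∀ X, SSize mem stP X → (∀ Y, mem Y X → Internal mem stP Y) →
    (∀ X', (∃ Y, mem Y X') → SubIn mem TrueC X' X → FiniteIn mem TrueC X' →
      ∃ z, ∀ Y, mem Y X' → mem z Y) →
    ∃ z, ∀ Y, mem Y X → mem z Y
  /-- 6: Choice for families indexed by a set of standard size. -/
  ss_choice : ∀ X, SSize mem stP X → (∀ x, mem x X → ∃ y, mem y x) →
    ∃ f, FuncOnIn mem TrueC f (fun x => mem x X) ∧
      ∀ x y, mem x X → FValIn mem TrueC f x y → mem y x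
  /-- 6: Dependent Choice. -/
  dep_choice : ∀ X R x0, mem x0 X →
    (∀ x, mem x X → ∃ y, mem y X ∧ ∃ q, mem q R ∧ OPairIn mem TrueC q x y) →
    ∃ w f, (∀ z, mem z w ↔ NatIn mem TrueC z) ∧ FuncOnIn mem TrueC f (fun k => mem k w) ∧
      (∀ k y, mem k w → FValIn mem TrueC f k y → mem y X) ∧
      (∀ e, EmptyIn mem TrueC e → mem e w → FValIn mem TrueC f e x0) ∧
      (∀ k s y y', mem k w → mem s w → SuccIn mem TrueC s k →
        FValIn mem TrueC f k y → FValIn mem TrueC f s y' →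
        ∃ q, mem q R ∧ OPairIn mem TrueC q y y')

/-! ### BST -/

/-- The class `C` (with the standardness predicate `stP`) is a model of
bounded set theory BST. -/
structure BSTModelIn (mem : M → M → Prop) (stP : M → Prop) (C : M → Prop) : Prop where
  /-- ZFC in the ∈-language. -/
  zfc : ZFCModelIn mem C
  /-- standard sets belong to the universe. -/
  st_sub : ∀ x, stP x → C x
  /-- Bounded Idealization. -/
  bdd_idealization : ∀ {n} (φ : StFormula (n + 2)), φ.IsEpsilon →
    ∀ val : Fin n → M, (∀ i, C (val i)) → ∀ X, stP X →
      ((∀ A, stP A → FiniteIn mem C A →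
          ∃ x, C x ∧ mem x X ∧ ∀ a, C a → mem a A →
            EvalIn mem stP C φ (Fin.snoc (Fin.snoc val x) a)) ↔
       (∃ x, C x ∧ mem x X ∧ ∀ a, stP a →
          EvalIn mem stP C φ (Fin.snoc (Fin.snoc val x) a)))
  /-- Standardization for all ∈-st-formulas. -/
  standardization : ∀ {n} (φ : StFormula (n + 1)) (val : Fin n → M), (∀ i, C (val i)) →
    ∀ X, stP X → ∃ Y, stP Y ∧ ∀ x, stP x →
      (mem x Y ↔ (mem x X ∧ EvalIn mem stP C φ (Fin.snoc val x)))
  /-- Transfer. -/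
  transfer : ∀ {n} (φ : StFormula (n + 1)), φ.IsEpsilon →
    ∀ val : Fin n → M, (∀ i, stP (val i)) →
      (∃ x, C x ∧ EvalIn mem FalseC C φ (Fin.snoc val x)) →
      ∃ x, stP x ∧ EvalIn mem FalseC C φ (Fin.snoc val x)
  /-- Boundedness. -/
  boundedness : ∀ x, C x → ∃ X, stP X ∧ mem x X

/-! ### Condensation -/

/-- `h` is the condensation map: `h x = {h y : y ∈ x, y standard}` for standard `x`. -/
def Condenses (mem : M → M → Prop) (stP : M → Prop) (h : M → M) : Prop :=
  ∀ x, stP x → ∀ z, mem z (h x) ↔ ∃ y, stP y ∧ mem y x ∧ z = h y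

/-- The condensed subuniverse `V = {h x : x standard}`. -/
def CondV (stP : M → Prop) (h : M → M) (z : M) : Prop := ∃ x, stP x ∧ z = h x

/-! ### Internally presented structures and the isomorphism property -/

/-- `t` codes the tuple `l` (as an iterated Kuratowski pair). -/
def TupCode (mem : M → M → Prop) : List M → M → Prop
  | [], t => ∀ z, ¬ mem z t
  | x :: l, t => ∃ r, OPairIn mem TrueC t x r ∧ TupCode mem l r

/-- `(A, R)` is an internally presented structure of the (relational) language
with symbols `ι` and arities `ar`: the base set `A` and each interpretation
`R s` (a set of `ar s`-tuples from `A`) is internal. -/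
def IntPresented (mem : M → M → Prop) (stP : M → Prop) {ι : Type v} (ar : ι → ℕ)
    (A : M) (R : ι → M) : Prop :=
  Internal mem stP A ∧ ∀ s : ι, Internal mem stP (R s) ∧
    ∀ t, mem t (R s) → ∃ l : List M, l.length = ar s ∧ (∀ x ∈ l, mem x A) ∧ TupCode mem l t

/-- First-order formulas of a relational language. -/
inductive FOF (ι : Type v) (ar : ι → ℕ) : ℕ → Type v where
  | rel {n} (s : ι) (ts : Fin (ar s) → Fin n) : FOF ι ar n
  | eq {n} (i j : Fin n) : FOF ι ar n
  | not {n} (φ : FOF ι ar n) : FOF ι ar n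
  | and {n} (φ ψ : FOF ι ar n) : FOF ι ar n
  | all {n} (φ : FOF ι ar (n + 1)) : FOF ι ar n

/-- Satisfaction in an internally presented structure. -/
def FOSat (mem : M → M → Prop) {ι : Type v} {ar : ι → ℕ} (A : M) (R : ι → M) :
    ∀ {n}, FOF ι ar n → (Fin n → M) → Prop
  | _, .rel s ts, val => ∃ t, TupCode mem (List.ofFn fun k => val (ts k)) t ∧ mem t (R s)
  | _, .eq i j, val => val i = val j
  | _, .not φ, val => ¬ FOSat mem A R φ val
  | _, .and φ ψ, val => FOSat mem A R φ val ∧ FOSat mem A R ψ val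
  | _, .all φ, val => ∀ x, mem x A → FOSat mem A R φ (Fin.snoc val x)

/-- Elementary equivalence of the two structures. -/
def ElemEq (mem : M → M → Prop) {ι : Type v} (ar : ι → ℕ)
    (A : M) (RA : ι → M) (B : M) (RB : ι → M) : Prop :=
  ∀ φ : FOF ι ar 0, (FOSat mem A RA φ Fin.elim0 ↔ FOSat mem B RB φ Fin.elim0)

/-- The two structures are isomorphic (via an isomorphism which is a set of
the model). -/
def IsoIn (mem : M → M → Prop) {ι : Type v}
    (A : M) (RA : ι → M) (B : M) (RB : ι → M) : Prop :=
  ∃ f : M, FuncOnIn mem TrueC f (fun x => mem x A) ∧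
    (∀ x y, mem x A → FValIn mem TrueC f x y → mem y B) ∧
    (∀ x x' y, FValIn mem TrueC f x y → FValIn mem TrueC f x' y → x = x') ∧
    (∀ y, mem y B → ∃ x, mem x A ∧ FValIn mem TrueC f x y) ∧
    (∀ (s : ι) (l l' : List M), (∀ x ∈ l, mem x A) →
      List.Forall₂ (FValIn mem TrueC f) l l' →
      ∀ t t', TupCode mem l t → TupCode mem l' t' → (mem t (RA s) ↔ mem t' (RB s)))

/-- The index type `ι` is of standard size: it is equinumerous (externally)
with `σS = {x ∈ S : st x}` for some standard `S`. -/
def SSizeIndex (mem : M → M → Prop) (stP : M → Prop) (ι : Type v) : Prop :=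
  ∃ S : M, stP S ∧ ∃ e : ι → M, Function.Injective e ∧
    (∀ i, stP (e i) ∧ mem (e i) S) ∧ (∀ x, stP x → mem x S → ∃ i, e i = x)

/-- The isomorphism property IP: any two internally presented elementarily
equivalent structures of a language with (standard size)-many symbols are
isomorphic. -/
def IPProp (mem : M → M → Prop) (stP : M → Prop) : Prop :=
  ∀ (ι : Type u) (ar : ι → ℕ), SSizeIndex mem stP ι →
    ∀ (A : M) (RA : ι → M) (B : M) (RB : ι → M),
      IntPresented mem stP ar A RA → IntPresented mem stP ar B RB →
      ElemEq mem ar A RA B RB → IsoIn mem A RA B RB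

/-! ### Partially ordered sets inside the model; closure and distributivity -/

section PO
variable (mem : M → M → Prop)

/-- `p ≤ q` according to the set `R` of ordered pairs. -/
def LeVia (R p q : M) : Prop := ∃ z, mem z R ∧ OPairIn mem TrueC z p q

/-- `⟨P; R⟩` is a partially ordered set (coded in the model). -/
def IsPOOn (P R : M) : Prop :=
  (∀ z, mem z R → ∃ p q, mem p P ∧ mem q P ∧ OPairIn mem TrueC z p q) ∧
  (∀ p, mem p P → LeVia mem R p p) ∧
  (∀ p q, LeVia mem R p q → LeVia mem R q p → p = q) ∧
  (∀ p q r, LeVia mem R p q → LeVia mem R q r → LeVia mem R p r)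

/-- `⟨P; R⟩` is `κ`-closed: every decreasing `κ`-sequence (a set-coded function
on `κ`) has a lower bound. -/
def KClosed (κ P R : M) : Prop :=
  ∀ f, FuncOnIn mem TrueC f (fun α => mem α κ) →
    (∀ α y, mem α κ → FValIn mem TrueC f α y → mem y P) →
    (∀ α β u w, mem α β → mem β κ → FValIn mem TrueC f α u → FValIn mem TrueC f β w →
      LeVia mem R w u) →
    ∃ p, mem p P ∧ ∀ α u, mem α κ → FValIn mem TrueC f α u → LeVia mem R p u

/-- `Y` is an open dense subset of `⟨P; R⟩`. -/
def OpenDenseIn (P R Y : M) : Prop :=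
  (∀ y, mem y Y → mem y P) ∧
  (∀ p, mem p P → ∃ q, mem q Y ∧ LeVia mem R q p) ∧
  (∀ p q, mem p P → mem q Y → LeVia mem R p q → mem p Y)

/-- `⟨P; R⟩` is `κ`-distributive: the intersection of `κ`-many open dense
subsets is dense. -/
def KDistrib (κ P R : M) : Prop :=
  ∀ Df, FuncOnIn mem TrueC Df (fun α => mem α κ) →
    (∀ α Y, mem α κ → FValIn mem TrueC Df α Y → OpenDenseIn mem P R Y) →
    ∀ p, mem p P → ∃ q, mem q P ∧ LeVia mem R q p ∧
      ∀ α Y, mem α κ → FValIn mem TrueC Df α Y → mem q Y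

/-- For each cardinal `κ`, every `κ`-closed p.o. set is `κ`-distributive. -/
def KClosedDistrib : Prop :=
  ∀ κ, CardinalIn mem TrueC κ → ∀ P R, IsPOOn mem P R → KClosed mem κ P R → KDistrib mem κ P R

/-- `⟨P; R⟩` is standard size distributive: `κ`-distributive for every cardinal. -/
def SSDistribOn (P R : M) : Prop :=
  ∀ κ, CardinalIn mem TrueC κ → KDistrib mem κ P R

end PO

/-! ### The class L[I] of sets constructible from internal sets -/

section LI
variable (mem : M → M → Prop) (stP : M → Prop)

/-- `n` is a natural number of the internal universe. -/
def INat (n : M) : Prop := Internal mem stP n ∧ NatIn mem (Internal mem stP) n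

/-- `t` is an internal finite sequence: an internal function whose domain is a
natural number of the internal universe. -/
def IsISeq (t : M) : Prop :=
  Internal mem stP t ∧ ∃ n, INat mem stP n ∧ FuncOnIn mem TrueC t (fun i => mem i n)

/-- `T` is a tree: a nonempty set of internal finite sequences closed under
initial segments. -/
def IsTreeSet (T : M) : Prop :=
  (∃ t, mem t T) ∧ (∀ t, mem t T → IsISeq mem stP t) ∧
  (∀ t, mem t T → ∀ t', IsISeq mem stP t' → SubIn mem TrueC t' t → mem t' T)

/-- `t` is a `⊆`-maximal element of `T`. -/
def MaxIn (T t : M) : Prop := mem t T ∧ ∀ s, mem s T → SubIn mem TrueC t s → s = t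

/-- `T` is well-founded: every nonempty subset of `T` has a `⊆`-maximal element. -/
def WfTreeSet (T : M) : Prop :=
  ∀ T', (∃ t, mem t T') → SubIn mem TrueC T' T →
    ∃ t, mem t T' ∧ ∀ s, mem s T' → SubIn mem TrueC t s → s = t

/-- `s = t ⌢ a`. -/
def IsConcat (s t a : M) : Prop :=
  ∃ n n', INat mem stP n ∧ SuccIn mem TrueC n' n ∧
    FuncOnIn mem TrueC t (fun i => mem i n) ∧ FuncOnIn mem TrueC s (fun i => mem i n') ∧
    (∀ i w, mem i n → (FValIn mem TrueC t i w ↔ FValIn mem TrueC s i w)) ∧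
    FValIn mem TrueC s n a

/-- `p` is of the form `⟨A, B, η⟩` with `A, B` standard and `η` an internal
function on `A × B`. -/
def CpForm (p A B η : M) : Prop :=
  (∃ r, OPairIn mem TrueC p A r ∧ OPairIn mem TrueC r B η) ∧ stP A ∧ stP B ∧
    Internal mem stP η ∧
    FuncOnIn mem TrueC η (fun q => ∃ a b, mem a A ∧ mem b B ∧ OPairIn mem TrueC q a b)

/-- `z = C_p = ⋃_{a ∈ σA} ⋂_{b ∈ σB} η(a,b)` (and `z = ∅` if `p` is not of
the appropriate form). -/
def IsCp (p z : M) : Prop :=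
  (∃ A B η, CpForm mem stP p A B η ∧
    ∀ x, mem x z ↔ ∃ a, stP a ∧ mem a A ∧ ∀ b, stP b → mem b B →
      ∃ q w, OPairIn mem TrueC q a b ∧ FValIn mem TrueC η q w ∧ mem x w) ∨
  ((¬ ∃ A B η, CpForm mem stP p A B η) ∧ ∀ x, ¬ mem x z)

/-- `z` is an elementary external set. -/
def EE (z : M) : Prop := ∃ p, Internal mem stP p ∧ IsCp mem stP p z

/-- `⟨T, F⟩` is a wf pair with `T, F ∈ E`: `T` is a wf tree and
`F : Max T → I`. -/
def IsWfPairHC (T F : M) : Prop :=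
  EE mem stP T ∧ EE mem stP F ∧ IsTreeSet mem stP T ∧ WfTreeSet mem T ∧
  FuncOnIn mem TrueC F (MaxIn mem T) ∧
  (∀ t y, FValIn mem TrueC F t y → Internal mem stP y)

/-- `z ∈ L[I]`: `z = F[T]` for some wf pair `⟨T, F⟩ ∈ H`, witnessed by an
assembling function `g` (so `z = F_T(Λ)`). -/
def LIclass (z : M) : Prop :=
  ∃ T F, IsWfPairHC mem stP T F ∧ ∃ g : M → M,
    (∀ t, MaxIn mem T t → FValIn mem TrueC F t (g t)) ∧
    (∀ t, mem t T → ¬ MaxIn mem T t →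
      ∀ w, mem w (g t) ↔ ∃ s, mem s T ∧ (∃ a, IsConcat mem stP s t a) ∧ w = g s) ∧
    ∃ e, (∀ w, ¬ mem w e) ∧ mem e T ∧ z = g e

end LI

end HSTF

namespace HSTF

variable {M : Type u}

/-! ### Forcing over a model of HST -/

/-- `H` is well-founded over `I`: the ordinals of the model are well-founded
in the wider universe. -/
def WfOverI (mem : M → M → Prop) : Prop :=
  WellFounded (fun x y : M => OrdIn mem TrueC x ∧ OrdIn mem TrueC y ∧ mem x y)

/-- `a = x̆ = ⟨0, x⟩`, the canonical name for `x`. -/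
def IsBreve (mem : M → M → Prop) (a x : M) : Prop :=
  ∃ e, (∀ z, ¬ mem z e) ∧ OPairIn mem TrueC a e x

/-- `a` is a `P`-name (for the class `Pp` of forcing conditions):
either a canonical name `x̆`, or a set of pairs `⟨p, b⟩` with `p` a condition
and `b` a name. -/
inductive IsName (mem : M → M → Prop) (Pp : M → Prop) : M → Prop where
  | ground (a x : M) (h : IsBreve mem a x) : IsName mem Pp a
  | mk (a : M) (pf bf : M → M)
      (h : ∀ z, mem z a → Pp (pf z) ∧ OPairIn mem TrueC z (pf z) (bf z))
      (hrec : ∀ z, mem z a → IsName mem Pp (bf z)) : IsName mem Pp a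

/-- External values of names: either an element of the model (an atom) or a
set of previously constructed values. -/
inductive GVal (M : Type u) : Type (u + 1) where
  | atom (x : M) : GVal M
  | mk (ι : Type u) (f : ι → GVal M) : GVal M

/-- The value `v` is extensionally equal to (the model element) `x`. -/
def AEq (mem : M → M → Prop) : M → GVal M → Prop
  | x, .atom y => x = y
  | x, .mk _ f => (∀ y, mem y x → ∃ i, AEq mem y (f i)) ∧ (∀ i, ∃ y, mem y x ∧ AEq mem y (f i))

/-- Extensional equality of values (identifying a value with a model element
having the same members). -/
def GEquiv (mem : M → M → Prop) : GVal M → GVal M → Prop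
  | .atom x, v => AEq mem x v
  | .mk ι f, .atom y => AEq mem y (.mk ι f)
  | .mk _ f, .mk _ g => (∀ i, ∃ j, GEquiv mem (f i) (g j)) ∧ (∀ j, ∃ i, GEquiv mem (f i) (g j))

/-- Membership between values. -/
def GMem (mem : M → M → Prop) : GVal M → GVal M → Prop
  | u, .atom x => ∃ y, mem y x ∧ GEquiv mem u (.atom y)
  | u, .mk _ f => ∃ i, GEquiv mem u (f i)

/-- `u` is the value `a[G]` of the name `a` under the generic class `G`. -/
inductive ValRel (mem : M → M → Prop) (Pp G : M → Prop) : M → GVal M → Prop where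
  | ground (a x : M) (h : IsBreve mem a x) : ValRel mem Pp G a (GVal.atom x)
  | proper (a : M) (ι : Type u) (f : ι → GVal M)
      (hng : ¬ ∃ x, IsBreve mem a x)
      (sel : M → M → M → ι)
      (h1 : ∀ z p b, mem z a → Pp p → G p → OPairIn mem TrueC z p b →
        ValRel mem Pp G b (f (sel z p b)))
      (zf pf bf : ι → M)
      (h2 : ∀ i, mem (zf i) a ∧ Pp (pf i) ∧ G (pf i) ∧
        OPairIn mem TrueC (zf i) (pf i) (bf i))
      (h3 : ∀ i, ValRel mem Pp G (bf i) (f i)) :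
      ValRel mem Pp G a (GVal.mk ι f)

/-- Carrier of the generic extension `H[G]` (before extensional collapse). -/
def HGCarrier (mem : M → M → Prop) (Pp G : M → Prop) : Type (u + 1) :=
  {w : GVal M // ∃ a, IsName mem Pp a ∧ ValRel mem Pp G a w}

/-- The generic extension `H[G] = {a[G] : a a name}`, extensional values being
identified. -/
def HGType (mem : M → M → Prop) (Pp G : M → Prop) : Type (u + 1) :=
  Quot (fun u w : HGCarrier mem Pp G => GEquiv mem u.1 w.1)

/-- Membership `∈_G` of the extension. -/
def QMem (mem : M → M → Prop) (Pp G : M → Prop) (a b : HGType mem Pp G) : Prop :=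
  ∃ u w : HGCarrier mem Pp G, a = Quot.mk _ u ∧ b = Quot.mk _ w ∧ GMem mem u.1 w.1

/-- Standardness in the extension. -/
def QSt (mem : M → M → Prop) (stP Pp G : M → Prop) (a : HGType mem Pp G) : Prop :=
  ∃ u : HGCarrier mem Pp G, a = Quot.mk _ u ∧ ∃ s, stP s ∧ GEquiv mem u.1 (GVal.atom s)

/-- `b` (an element of `H[G]`) is the value `a[G]` of the name `a`. -/
def Represents (mem : M → M → Prop) (Pp G : M → Prop) (b : HGType mem Pp G) (a : M) : Prop :=
  ∃ u : HGCarrier mem Pp G, b = Quot.mk _ u ∧ ValRel mem Pp G a u.1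

/-- `G` is generic over the model, for the conditions `Pp` ordered by `ple`:
upward closed, directed, and meeting every dense subset belonging to the model. -/
def GenericOver (mem : M → M → Prop) (Pp : M → Prop) (ple : M → M → Prop) (G : M → Prop) :
    Prop :=
  (∀ p, G p → Pp p) ∧
  (∀ p q, G p → Pp q → ple p q → G q) ∧
  (∀ p q, G p → G q → ∃ r, G r ∧ ple r p ∧ ple r q) ∧
  (∀ D : M, (∀ z, mem z D → Pp z) → (∀ p, Pp p → ∃ q, mem q D ∧ ple q p) →
    ∃ q, G q ∧ mem q D)

/-- The auxiliary relation `p ⊩* b ∈ a`. -/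
def SFo (mem : M → M → Prop) (Pp : M → Prop) (ple : M → M → Prop) (p b a : M) : Prop :=
  (∃ x, IsBreve mem a x ∧ ∃ y, mem y x ∧ IsBreve mem b y) ∨
  ((¬ ∃ x, IsBreve mem a x) ∧ ∃ q z, Pp q ∧ ple p q ∧ mem z a ∧ OPairIn mem TrueC z q b)

/-- Forcing for atomic formulas: `AFo _ _ _ true p a b` means `p ⊩ a = b`,
and `AFo _ _ _ false p b a` means `p ⊩ b ∈ a`. -/
inductive AFo (mem : M → M → Prop) (Pp : M → Prop) (ple : M → M → Prop) :
    Bool → M → M → M → Prop where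
  | breveEq (p a b x y : M) (ha : IsBreve mem a x) (hb : IsBreve mem b y) (hxy : x = y) :
      AFo mem Pp ple true p a b
  | breveMem (p b a x y : M) (hb : IsBreve mem b y) (ha : IsBreve mem a x) (hm : mem y x) :
      AFo mem Pp ple false p b a
  | eqI (p a b : M)
      (h1 : ∀ q x, Pp q → ple q p → SFo mem Pp ple q x a → AFo mem Pp ple false q x b)
      (h2 : ∀ q y, Pp q → ple q p → SFo mem Pp ple q y b → AFo mem Pp ple false q y a) :
      AFo mem Pp ple true p a b
  | memI (p b a : M) (rf zf : M → M)
      (h1 : ∀ q, Pp q → ple q p → Pp (rf q) ∧ ple (rf q) q ∧ SFo mem Pp ple (rf q) (zf q) a)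
      (h2 : ∀ q, Pp q → ple q p → AFo mem Pp ple true (rf q) b (zf q)) :
      AFo mem Pp ple false p b a

/-- The forcing relation `p ⊩ Φ`, for a formula with names as parameters. -/
def Fo (mem : M → M → Prop) (stP : M → Prop) (Pp : M → Prop) (ple : M → M → Prop) :
    ∀ {n}, M → StFormula n → (Fin n → M) → Prop
  | _, p, .mem i j, val => AFo mem Pp ple false p (val i) (val j)
  | _, p, .eq i j, val => AFo mem Pp ple true p (val i) (val j)
  | _, p, .st i, val => ∀ q, Pp q → ple q p → ∃ r, Pp r ∧ ple r q ∧
      ∃ s b, stP s ∧ IsBreve mem b s ∧ AFo mem Pp ple true r (val i) b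
  | _, p, .not φ, val => ∀ q, Pp q → ple q p → ¬ Fo mem stP Pp ple q φ val
  | _, p, .and φ ψ, val => Fo mem stP Pp ple p φ val ∧ Fo mem stP Pp ple p ψ val
  | _, p, .all φ, val => ∀ a, IsName mem Pp a → Fo mem stP Pp ple p φ (Fin.snoc val a)

/-! ### The type-theoretic extension L^∞ and the forcing P_{LAB} -/

/-- Types of the type-theoretic extension: `0` and `τ(l₁, …, l_k)`. -/
inductive TType : Type where
  | zero : TType
  | tau (l : List TType) : TType

mutual
/-- `x` is an object of type `l` over the internal set `D`. -/
def ObjType (mem : M → M → Prop) (intl : M → Prop) (D : M) : TType → M → Prop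
  | .zero, x => mem x D
  | .tau ls, x => intl x ∧ ∀ z, mem z x → ObjTuple mem intl D ls z
/-- `z` codes a tuple of objects of the given types over `D`. -/
def ObjTuple (mem : M → M → Prop) (intl : M → Prop) (D : M) : List TType → M → Prop
  | [], z => ∀ w, ¬ mem w z
  | t :: ts, z => ∃ y r, OPairIn mem TrueC z y r ∧ ObjType mem intl D t y ∧
      ObjTuple mem intl D ts r
end

mutual
/-- The canonical extension `p^l` of an internal bijection `p` to objects of
type `l`: `PExt mem intl p l x y` means `p^l(x) = y`. -/
def PExt (mem : M → M → Prop) (intl : M → Prop) (p : M) : TType → M → M → Prop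
  | .zero, x, y => FValIn mem TrueC p x y
  | .tau ls, x, y => intl y ∧
      (∀ z, mem z x → ∃ w, mem w y ∧ PExtTuple mem intl p ls z w) ∧
      (∀ w, mem w y → ∃ z, mem z x ∧ PExtTuple mem intl p ls z w)
def PExtTuple (mem : M → M → Prop) (intl : M → Prop) (p : M) : List TType → M → M → Prop
  | [], z, w => (∀ u, ¬ mem u z) ∧ (∀ u, ¬ mem u w)
  | t :: ts, z, w => ∃ x r x' r', OPairIn mem TrueC z x r ∧ OPairIn mem TrueC w x' r' ∧
      PExt mem intl p t x x' ∧ PExtTuple mem intl p ts r r'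
end

/-- Formulas of the type-theoretic extension `L^∞` of the language with symbols
`ι`; `m` counts the `L`-variables, `Γ` is the context of typed variables. -/
inductive LIF (ι : Type v) : ℕ → List TType → Type v where
  | rel {m Γ} (s : ι) (k : ℕ) (ts : Fin k → Fin m) : LIF ι m Γ
  | eqL {m Γ} (i j : Fin m) : LIF ι m Γ
  | eqT {m Γ} (i : Fin m) (j : Fin Γ.length) (h : Γ.get j = TType.zero) : LIF ι m Γ
  | app {m Γ} (f : Fin Γ.length) (args : List (Fin Γ.length))
      (h : Γ.get f = TType.tau (args.map Γ.get)) : LIF ι m Γ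
  | not {m Γ} (φ : LIF ι m Γ) : LIF ι m Γ
  | and {m Γ} (φ ψ : LIF ι m Γ) : LIF ι m Γ
  | allL {m Γ} (φ : LIF ι (m + 1) Γ) : LIF ι m Γ
  | allT {m Γ} (t : TType) (φ : LIF ι m (t :: Γ)) : LIF ι m Γ

/-- Satisfaction of an `L^∞`-formula in the structure `A[D]` (base set `Amb`,
typed domains over `D`, interpretations `R`). -/
def SatInf {ι : Type v} (mem : M → M → Prop) (intl : M → Prop) (Amb D : M) (R : ι → M) :
    ∀ {m Γ}, LIF ι m Γ → (Fin m → M) → (Fin Γ.length → M) → Prop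
  | _, _, .rel s _ ts, vL, _ => ∃ t, TupCode mem (List.ofFn fun i => vL (ts i)) t ∧ mem t (R s)
  | _, _, .eqL i j, vL, _ => vL i = vL j
  | _, _, .eqT i j _, vL, vT => vL i = vT j
  | _, _, .app f args _, _, vT => ∃ t, TupCode mem (args.map vT) t ∧ mem t (vT f)
  | _, _, .not φ, vL, vT => ¬ SatInf mem intl Amb D R φ vL vT
  | _, _, .and φ ψ, vL, vT => SatInf mem intl Amb D R φ vL vT ∧ SatInf mem intl Amb D R ψ vL vT
  | _, _, .allL φ, vL, vT => ∀ x, mem x Amb → SatInf mem intl Amb D R φ (Fin.cons x vL) vT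
  | _, _, .allT t φ, vL, vT => ∀ x, ObjType mem intl D t x →
      SatInf mem intl Amb D R φ vL (Fin.cons x vT)

/-- `p` is a condition of the forcing `P_{LAB}` with domain `D` and range `E`:
an internal 1-1 map of `D ⊆ A` onto `E ⊆ B` preserving all closed
`L^∞`-formulas with parameters in `D^∞`. -/
def PCondOn (mem : M → M → Prop) (stP : M → Prop) {ι : Type v}
    (A B : M) (RA RB : ι → M) (D E p : M) : Prop :=
  Internal mem stP p ∧ Internal mem stP D ∧ Internal mem stP E ∧
  SubIn mem TrueC D A ∧ SubIn mem TrueC E B ∧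
  FuncOnIn mem TrueC p (fun x => mem x D) ∧
  (∀ x x' y, FValIn mem TrueC p x y → FValIn mem TrueC p x' y → x = x') ∧
  (∀ y, mem y E ↔ ∃ x, mem x D ∧ FValIn mem TrueC p x y) ∧
  (∀ (Γ : List TType) (φ : LIF ι 0 Γ) (vT wT : Fin Γ.length → M),
    (∀ j, ObjType mem (Internal mem stP) D (Γ.get j) (vT j)) →
    (∀ j, PExt mem (Internal mem stP) p (Γ.get j) (vT j) (wT j)) →
    (SatInf mem (Internal mem stP) A D RA φ Fin.elim0 vT ↔
     SatInf mem (Internal mem stP) B E RB φ Fin.elim0 wT))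

/-- `p ∈ P_{LAB}`. -/
def PCond (mem : M → M → Prop) (stP : M → Prop) {ι : Type v}
    (A B : M) (RA RB : ι → M) (p : M) : Prop :=
  ∃ D E, PCondOn mem stP A B RA RB D E p

/-! ### The product forcing Π -/

section Pi
variable (mem : M → M → Prop) (stP : M → Prop)

/-- `i = ⟨w, κ, L, A, B⟩`. -/
def Is5Tup (i w κ L A B : M) : Prop :=
  ∃ r1 r2 r3, OPairIn mem TrueC i w r1 ∧ OPairIn mem TrueC r1 κ r2 ∧
    OPairIn mem TrueC r2 L r3 ∧ OPairIn mem TrueC r3 A B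

/-- `κ` is a cardinal of the internal universe. -/
def ICardinal (κ : M) : Prop :=
  Internal mem stP κ ∧ CardinalIn mem (Internal mem stP) κ

/-- `x` is internal and finite in the sense of the internal universe. -/
def IFinite (x : M) : Prop := Internal mem stP x ∧ FiniteIn mem (Internal mem stP) x

/-- `i` is an index: an internal 5-tuple `⟨w, κ, L, A, B⟩` where `κ` is an
I-cardinal, `L` an internal language `{s_α : α < κ}`, and `A`, `B` internal
`L`-structures (coded as pairs of a base set and an interpretation map). -/
def IsIndex (i : M) : Prop :=
  Internal mem stP i ∧ ∃ w κ L A B, Is5Tup mem i w κ L A B ∧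
    Internal mem stP w ∧ ICardinal mem stP κ ∧
    Internal mem stP L ∧ FuncOnIn mem TrueC L (fun α => mem α κ) ∧
    (∃ bA iA, OPairIn mem TrueC A bA iA ∧ Internal mem stP bA ∧ Internal mem stP iA ∧
      FuncOnIn mem TrueC iA (fun α => mem α κ)) ∧
    (∃ bB iB, OPairIn mem TrueC B bB iB ∧ Internal mem stP bB ∧ Internal mem stP iB ∧
      FuncOnIn mem TrueC iB (fun α => mem α κ))

/-- `q ∈ P_{L_i A_i B_i}` for the index with components `κ, A, B`: the
language of the restricted structures has as symbols the standard `α < κ`. -/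
def PCondIdx (κ A B q : M) : Prop :=
  ∀ bA iA bB iB, OPairIn mem TrueC A bA iA → OPairIn mem TrueC B bB iB →
    ∀ RA RB : {α : M // stP α ∧ mem α κ} → M,
      (∀ α, FValIn mem TrueC iA α.1 (RA α)) → (∀ α, FValIn mem TrueC iB α.1 (RB α)) →
      PCond mem stP bA bB RA RB q

/-- `π ∈ Π`: an internal function with internal I-finite domain consisting of
indices, whose value at each index is a condition of the corresponding
forcing `P_{L_i A_i B_i}`. -/
def IsPiCond (π : M) : Prop :=
  Internal mem stP π ∧ ∃ d, Internal mem stP d ∧ IFinite mem stP d ∧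
    (∀ i, mem i d → IsIndex mem stP i) ∧ FuncOnIn mem TrueC π (fun i => mem i d) ∧
    (∀ i q w κ L A B, mem i d → FValIn mem TrueC π i q → Is5Tup mem i w κ L A B →
      PCondIdx mem stP κ A B q)

/-- The order of `Π`: `π ≤ ρ` iff the domain of `π` extends that of `ρ` and
componentwise `π_i ≤ ρ_i` (i.e. `ρ_i ⊆ π_i`). -/
def PiLe (π ρ : M) : Prop :=
  ∀ i q, FValIn mem TrueC ρ i q → ∃ q', FValIn mem TrueC π i q' ∧ SubIn mem TrueC q q'

/-- `Dc` is an open dense subclass of `Π`. -/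
def PiOpenDense (Dc : M → Prop) : Prop :=
  (∀ π, Dc π → IsPiCond mem stP π) ∧
  (∀ π, IsPiCond mem stP π → ∃ ρ, Dc ρ ∧ IsPiCond mem stP ρ ∧ PiLe mem ρ π) ∧
  (∀ π ρ, IsPiCond mem stP π → Dc ρ → PiLe mem π ρ → Dc π)

end Pi

/-! ### Miscellanea for particular statements -/

/-- `X` is infinite in the sense of the internal universe. -/
def InfiniteI (mem : M → M → Prop) (stP : M → Prop) (X : M) : Prop :=
  Internal mem stP X ∧ ¬ FiniteIn mem (Internal mem stP) X

/-- `card X < card Y` in the internal universe. -/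
def CardLtI (mem : M → M → Prop) (stP : M → Prop) (X Y : M) : Prop :=
  ∃ κ μ, ICardinal mem stP κ ∧ ICardinal mem stP μ ∧ mem κ μ ∧
    EquinumIn mem (Internal mem stP) X κ ∧ EquinumIn mem (Internal mem stP) Y μ

end HSTF

namespace HSTF

open StFormula

variable {M : Type u} {mem : M → M → Prop} {s s' C : M → Prop}

/-! #### Derived connectives -/

def fOr {n} (φ ψ : StFormula n) : StFormula n := .not ((StFormula.not φ).and (.not ψ))
def fImp {n} (φ ψ : StFormula n) : StFormula n := .not (φ.and (.not ψ))
def fIff {n} (φ ψ : StFormula n) : StFormula n := (fImp φ ψ).and (fImp ψ φ)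
def fEx {n} (φ : StFormula (n+1)) : StFormula n := .not (.all (.not φ))

@[simp] lemma eval_mem' {n} (i j : Fin n) (val : Fin n → M) :
    EvalIn mem s C (.mem i j) val ↔ mem (val i) (val j) := Iff.rfl
@[simp] lemma eval_eq' {n} (i j : Fin n) (val : Fin n → M) :
    EvalIn mem s C (.eq i j) val ↔ val i = val j := Iff.rfl
@[simp] lemma eval_st' {n} (i : Fin n) (val : Fin n → M) :
    EvalIn mem s C (.st i) val ↔ s (val i) := Iff.rfl
@[simp] lemma eval_not' {n} (φ : StFormula n) (val : Fin n → M) :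
    EvalIn mem s C (.not φ) val ↔ ¬ EvalIn mem s C φ val := Iff.rfl
@[simp] lemma eval_and' {n} (φ ψ : StFormula n) (val : Fin n → M) :
    EvalIn mem s C (.and φ ψ) val ↔ EvalIn mem s C φ val ∧ EvalIn mem s C ψ val := Iff.rfl
@[simp] lemma eval_all' {n} (φ : StFormula (n+1)) (val : Fin n → M) :
    EvalIn mem s C (.all φ) val ↔ ∀ x, C x → EvalIn mem s C φ (Fin.snoc val x) := Iff.rfl

@[simp] lemma eval_fOr {n} (φ ψ : StFormula n) (val : Fin n → M) :
    EvalIn mem s C (fOr φ ψ) val ↔ EvalIn mem s C φ val ∨ EvalIn mem s C ψ val := by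
  simp [fOr]; tauto
@[simp] lemma eval_fImp {n} (φ ψ : StFormula n) (val : Fin n → M) :
    EvalIn mem s C (fImp φ ψ) val ↔ (EvalIn mem s C φ val → EvalIn mem s C ψ val) := by
  simp [fImp]
@[simp] lemma eval_fIff {n} (φ ψ : StFormula n) (val : Fin n → M) :
    EvalIn mem s C (fIff φ ψ) val ↔ (EvalIn mem s C φ val ↔ EvalIn mem s C ψ val) := by
  simp [fIff]; tauto
@[simp] lemma eval_fEx {n} (φ : StFormula (n+1)) (val : Fin n → M) :
    EvalIn mem s C (fEx φ) val ↔ ∃ x, C x ∧ EvalIn mem s C φ (Fin.snoc val x) := by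
  simp [fEx]

@[simp] lemma isE_mem {n} (i j : Fin n) : (StFormula.mem i j).IsEpsilon := trivial
@[simp] lemma isE_eq {n} (i j : Fin n) : (StFormula.eq i j).IsEpsilon := trivial
@[simp] lemma isE_st {n} (i : Fin n) : ¬ (StFormula.st i).IsEpsilon := fun h => h
@[simp] lemma isE_not {n} (φ : StFormula n) : (StFormula.not φ).IsEpsilon ↔ φ.IsEpsilon := Iff.rfl
@[simp] lemma isE_and {n} (φ ψ : StFormula n) :
    (StFormula.and φ ψ).IsEpsilon ↔ φ.IsEpsilon ∧ ψ.IsEpsilon := Iff.rfl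
@[simp] lemma isE_all {n} (φ : StFormula (n+1)) : (StFormula.all φ).IsEpsilon ↔ φ.IsEpsilon := Iff.rfl
@[simp] lemma isE_fOr {n} (φ ψ : StFormula n) :
    (fOr φ ψ).IsEpsilon ↔ φ.IsEpsilon ∧ ψ.IsEpsilon := by simp [fOr]
@[simp] lemma isE_fImp {n} (φ ψ : StFormula n) :
    (fImp φ ψ).IsEpsilon ↔ φ.IsEpsilon ∧ ψ.IsEpsilon := by simp [fImp]
@[simp] lemma isE_fIff {n} (φ ψ : StFormula n) :
    (fIff φ ψ).IsEpsilon ↔ φ.IsEpsilon ∧ ψ.IsEpsilon := by simp [fIff]; tauto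
@[simp] lemma isE_fEx {n} (φ : StFormula (n+1)) : (fEx φ).IsEpsilon ↔ φ.IsEpsilon := by simp [fEx]

/-! #### Renaming -/

def StFormula.rename : ∀ {n m}, (Fin n → Fin m) → StFormula n → StFormula m
  | _, _, ρ, .mem i j => .mem (ρ i) (ρ j)
  | _, _, ρ, .eq i j => .eq (ρ i) (ρ j)
  | _, _, ρ, .st i => .st (ρ i)
  | _, _, ρ, .not φ => .not (φ.rename ρ)
  | _, _, ρ, .and φ ψ => .and (φ.rename ρ) (ψ.rename ρ)
  | _, m, ρ, .all φ => .all (φ.rename (Fin.snoc (fun i => (ρ i).castSucc) (Fin.last m)))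

lemma eval_rename : ∀ {n m} (ρ : Fin n → Fin m) (φ : StFormula n) (val : Fin m → M),
    EvalIn mem s C (φ.rename ρ) val ↔ EvalIn mem s C φ (val ∘ ρ)
  | _, _, ρ, .mem i j, val => Iff.rfl
  | _, _, ρ, .eq i j, val => Iff.rfl
  | _, _, ρ, .st i, val => Iff.rfl
  | _, _, ρ, .not φ, val => by
      simp only [StFormula.rename, eval_not', eval_rename ρ φ val]
  | _, _, ρ, .and φ ψ, val => by
      simp only [StFormula.rename, eval_and', eval_rename ρ φ val, eval_rename ρ ψ val]
  | n, m, ρ, .all φ, val => by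
      simp only [StFormula.rename, eval_all']
      refine forall_congr' fun x => imp_congr Iff.rfl ?_
      rw [eval_rename]
      have h : (Fin.snoc val x : Fin (m+1) → M) ∘
          (Fin.snoc (fun i => (ρ i).castSucc) (Fin.last m)) = Fin.snoc (val ∘ ρ) x := by
        funext i
        refine Fin.lastCases ?_ (fun j => ?_) i <;>
          simp [Fin.snoc_castSucc, Fin.snoc_last]
      rw [h]

lemma isE_rename : ∀ {n m} (ρ : Fin n → Fin m) (φ : StFormula n),
    (φ.rename ρ).IsEpsilon ↔ φ.IsEpsilon
  | _, _, ρ, .mem i j => Iff.rfl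
  | _, _, ρ, .eq i j => Iff.rfl
  | _, _, ρ, .st i => Iff.rfl
  | _, _, ρ, .not φ => isE_rename ρ φ
  | _, _, ρ, .and φ ψ => by
      simp only [StFormula.rename, isE_and, isE_rename ρ φ, isE_rename _ ψ]
  | _, m, ρ, .all φ => by
      simp only [StFormula.rename, isE_all, isE_rename _ φ]

/-- For ∈-formulas, evaluation does not depend on the standardness predicate. -/
lemma eval_eps_irrel : ∀ {n} (φ : StFormula n), φ.IsEpsilon → ∀ (val : Fin n → M),
    (EvalIn mem s C φ val ↔ EvalIn mem s' C φ val)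
  | _, .mem i j, _, val => Iff.rfl
  | _, .eq i j, _, val => Iff.rfl
  | _, .st i, h, val => absurd h (isE_st i)
  | _, .not φ, h, val => by simp only [eval_not', eval_eps_irrel φ h val]
  | _, .and φ ψ, h, val => by
      simp only [eval_and', eval_eps_irrel φ h.1 val, eval_eps_irrel ψ h.2 val]
  | _, .all φ, h, val => by
      simp only [eval_all']
      exact forall_congr' fun x => imp_congr Iff.rfl (eval_eps_irrel φ h _)

end HSTF


namespace HSTF

open StFormula

variable {M : Type u} {mem : M → M → Prop} {s C : M → Prop}

/-! #### Deep codes for set-theoretic predicates -/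

def emptyF {n} (e : Fin n) : StFormula n := .all (.not (.mem (Fin.last n) e.castSucc))

@[simp] lemma eval_emptyF {n} (e : Fin n) (val : Fin n → M) :
    EvalIn mem s C (emptyF e) val ↔ EmptyIn mem C (val e) := by
  simp [emptyF, EmptyIn]

def subF {n} (x y : Fin n) : StFormula n :=
  .all (fImp (.mem (Fin.last n) x.castSucc) (.mem (Fin.last n) y.castSucc))

@[simp] lemma eval_subF {n} (x y : Fin n) (val : Fin n → M) :
    EvalIn mem s C (subF x y) val ↔ SubIn mem C (val x) (val y) := by
  simp [subF, SubIn]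

def singF {n} (t x : Fin n) : StFormula n :=
  .all (fIff (.mem (Fin.last n) t.castSucc) (.eq (Fin.last n) x.castSucc))

@[simp] lemma eval_singF {n} (t x : Fin n) (val : Fin n → M) :
    EvalIn mem s C (singF t x) val ↔ SingIn mem C (val t) (val x) := by
  simp [singF, SingIn]

def upairF {n} (p x y : Fin n) : StFormula n :=
  .all (fIff (.mem (Fin.last n) p.castSucc)
    (fOr (.eq (Fin.last n) x.castSucc) (.eq (Fin.last n) y.castSucc)))

@[simp] lemma eval_upairF {n} (p x y : Fin n) (val : Fin n → M) :
    EvalIn mem s C (upairF p x y) val ↔ UPairIn mem C (val p) (val x) (val y) := by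
  simp [upairF, UPairIn]

def succF {n} (t x : Fin n) : StFormula n :=
  .all (fIff (.mem (Fin.last n) t.castSucc)
    (fOr (.mem (Fin.last n) x.castSucc) (.eq (Fin.last n) x.castSucc)))

@[simp] lemma eval_succF {n} (t x : Fin n) (val : Fin n → M) :
    EvalIn mem s C (succF t x) val ↔ SuccIn mem C (val t) (val x) := by
  simp [succF, SuccIn]

def transF {n} (x : Fin n) : StFormula n :=
  .all (fImp (.mem (Fin.last n) x.castSucc)
    (.all (fImp (.mem (Fin.last (n+1)) ((Fin.last n).castSucc))
      (.mem (Fin.last (n+1)) x.castSucc.castSucc))))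

@[simp] lemma eval_transF {n} (x : Fin n) (val : Fin n → M) :
    EvalIn mem s C (transF x) val ↔ TransIn mem C (val x) := by
  simp [transF, TransIn]

def opairF {n} (p x y : Fin n) : StFormula n :=
  fEx (fEx (.and (singF ((Fin.last n).castSucc) x.castSucc.castSucc)
       (.and (upairF (Fin.last (n+1)) x.castSucc.castSucc y.castSucc.castSucc)
             (upairF p.castSucc.castSucc ((Fin.last n).castSucc) (Fin.last (n+1))))))

@[simp] lemma eval_opairF {n} (p x y : Fin n) (val : Fin n → M) :
    EvalIn mem s C (opairF p x y) val ↔ OPairIn mem C (val p) (val x) (val y) := by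
  simp only [opairF, eval_fEx, eval_and', eval_singF, eval_upairF, Fin.snoc_castSucc,
    Fin.snoc_last, OPairIn]
  constructor
  · rintro ⟨a, ha, b, hb, h1, h2, h3⟩; exact ⟨a, b, ha, hb, h1, h2, h3⟩
  · rintro ⟨a, b, ha, hb, h1, h2, h3⟩; exact ⟨a, ha, b, hb, h1, h2, h3⟩

def fvalF {n} (f x y : Fin n) : StFormula n :=
  fEx (.and (.mem (Fin.last n) f.castSucc)
    (opairF (Fin.last n) x.castSucc y.castSucc))

@[simp] lemma eval_fvalF {n} (f x y : Fin n) (val : Fin n → M) :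
    EvalIn mem s C (fvalF f x y) val ↔ FValIn mem C (val f) (val x) (val y) := by
  simp only [fvalF, eval_fEx, eval_and', eval_mem', eval_opairF, Fin.snoc_castSucc,
    Fin.snoc_last, FValIn]

def funcOnMemF {n} (f d : Fin n) : StFormula n :=
  .and (.all (fImp (.mem (Fin.last n) f.castSucc)
      (fEx (fEx (.and (.mem ((Fin.last (n+1)).castSucc) d.castSucc.castSucc.castSucc)
        (opairF ((Fin.last n).castSucc.castSucc) ((Fin.last (n+1)).castSucc)
          (Fin.last (n+2))))))))
  (.and (.all (fImp (.mem (Fin.last n) d.castSucc)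
      (fEx (fvalF f.castSucc.castSucc ((Fin.last n).castSucc) (Fin.last (n+1))))))
    (.all (.all (.all (fImp
      (fvalF f.castSucc.castSucc.castSucc ((Fin.last n).castSucc.castSucc)
        ((Fin.last (n+1)).castSucc))
      (fImp (fvalF f.castSucc.castSucc.castSucc ((Fin.last n).castSucc.castSucc)
        (Fin.last (n+2)))
      (.eq ((Fin.last (n+1)).castSucc) (Fin.last (n+2)))))))))

@[simp] lemma eval_funcOnMemF {n} (f d : Fin n) (val : Fin n → M) :
    EvalIn mem s C (funcOnMemF f d) val ↔
      FuncOnIn mem C (val f) (fun z => mem z (val d)) := by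
  simp only [funcOnMemF, eval_and', eval_all', eval_fImp, eval_fEx, eval_mem', eval_eq',
    eval_fvalF, eval_opairF, Fin.snoc_castSucc, Fin.snoc_last, FuncOnIn]
  refine and_congr ?_ (and_congr ?_ ?_)
  · constructor
    · rintro h p hp hpf
      obtain ⟨x, hx, y, hy, hxd, hop⟩ := h p hp hpf
      exact ⟨x, y, hx, hy, hxd, hop⟩
    · rintro h p hp hpf
      obtain ⟨x, y, hx, hy, hxd, hop⟩ := h p hp hpf
      exact ⟨x, hx, y, hy, hxd, hop⟩
  · tauto
  · constructor
    · rintro h x y y' hx hy hy' h1 h2; exact h x hx y hy y' hy' h1 h2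
    · rintro h x hx y hy y' hy' h1 h2; exact h x y y' hx hy hy' h1 h2

def injOnF {n} (f : Fin n) : StFormula n :=
  .all (.all (.all (fImp
    (fvalF f.castSucc.castSucc.castSucc ((Fin.last n).castSucc.castSucc) (Fin.last (n+2)))
    (fImp (fvalF f.castSucc.castSucc.castSucc ((Fin.last (n+1)).castSucc) (Fin.last (n+2)))
      (.eq ((Fin.last n).castSucc.castSucc) ((Fin.last (n+1)).castSucc))))))

@[simp] lemma eval_injOnF {n} (f : Fin n) (val : Fin n → M) :
    EvalIn mem s C (injOnF f) val ↔
      (∀ a b w, C a → C b → C w → FValIn mem C (val f) a w → FValIn mem C (val f) b w →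
        a = b) := by
  simp only [injOnF, eval_all', eval_fImp, eval_fvalF, eval_eq', Fin.snoc_castSucc,
    Fin.snoc_last]
  constructor
  · rintro h a b w ha hb hw h1 h2; exact h a ha b hb w hw h1 h2
  · rintro h a ha b hb w hw h1 h2; exact h a b w ha hb hw h1 h2

def imgF {n} (f x y : Fin n) : StFormula n :=
  .all (fIff (.mem (Fin.last n) y.castSucc)
    (fEx (.and (.mem (Fin.last (n+1)) x.castSucc.castSucc)
      (fvalF f.castSucc.castSucc (Fin.last (n+1)) ((Fin.last n).castSucc)))))

@[simp] lemma eval_imgF {n} (f x y : Fin n) (val : Fin n → M) :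
    EvalIn mem s C (imgF f x y) val ↔
      (∀ w, C w → (mem w (val y) ↔ ∃ a, C a ∧ mem a (val x) ∧
        FValIn mem C (val f) a w)) := by
  simp only [imgF, eval_all', eval_fIff, eval_fEx, eval_and', eval_mem', eval_fvalF,
    Fin.snoc_castSucc, Fin.snoc_last]

def equinumBodyF {n} (f x y : Fin n) : StFormula n :=
  .and (funcOnMemF f x) (.and (injOnF f) (imgF f x y))

@[simp] lemma eval_equinumBodyF {n} (f x y : Fin n) (val : Fin n → M) :
    EvalIn mem s C (equinumBodyF f x y) val ↔
      (FuncOnIn mem C (val f) (fun z => mem z (val x)) ∧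
       (∀ a b w, C a → C b → C w → FValIn mem C (val f) a w → FValIn mem C (val f) b w →
         a = b) ∧
       (∀ w, C w → (mem w (val y) ↔ ∃ a, C a ∧ mem a (val x) ∧
         FValIn mem C (val f) a w))) := by
  simp [equinumBodyF]

def equinumF {n} (x y : Fin n) : StFormula n :=
  fEx (equinumBodyF (Fin.last n) x.castSucc y.castSucc)

@[simp] lemma eval_equinumF {n} (x y : Fin n) (val : Fin n → M) :
    EvalIn mem s C (equinumF x y) val ↔ EquinumIn mem C (val x) (val y) := by
  simp only [equinumF, eval_fEx, eval_equinumBodyF, Fin.snoc_castSucc, Fin.snoc_last]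
  rfl

def wfF {n} (x : Fin n) : StFormula n :=
  .all (fImp (subF (Fin.last n) x.castSucc)
    (fImp (fEx (.mem (Fin.last (n+1)) ((Fin.last n).castSucc)))
      (fEx (.and (.mem (Fin.last (n+1)) ((Fin.last n).castSucc))
        (.all (fImp (.mem (Fin.last (n+2)) ((Fin.last (n+1)).castSucc))
          (.not (.mem (Fin.last (n+2)) ((Fin.last n).castSucc.castSucc)))))))))

@[simp] lemma eval_wfF {n} (x : Fin n) (val : Fin n → M) :
    EvalIn mem s C (wfF x) val ↔ WFIn mem C (val x) := by
  simp only [wfF, eval_all', eval_fImp, eval_fEx, eval_and', eval_not', eval_mem',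
    eval_subF, Fin.snoc_castSucc, Fin.snoc_last, WFIn]

def linF {n} (x : Fin n) : StFormula n :=
  .all (.all (fImp (.mem ((Fin.last n).castSucc) x.castSucc.castSucc)
    (fImp (.mem (Fin.last (n+1)) x.castSucc.castSucc)
      (fOr (.mem ((Fin.last n).castSucc) (Fin.last (n+1)))
        (fOr (.eq ((Fin.last n).castSucc) (Fin.last (n+1)))
          (.mem (Fin.last (n+1)) ((Fin.last n).castSucc)))))))

@[simp] lemma eval_linF {n} (x : Fin n) (val : Fin n → M) :
    EvalIn mem s C (linF x) val ↔
      (∀ y z, C y → C z → mem y (val x) → mem z (val x) →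
        (mem y z ∨ y = z ∨ mem z y)) := by
  simp only [linF, eval_all', eval_fImp, eval_fOr, eval_mem', eval_eq',
    Fin.snoc_castSucc, Fin.snoc_last]
  constructor
  · intro h y z hy hz h1 h2; exact h y hy z hz h1 h2
  · intro h y hy z hz h1 h2; exact h y z hy hz h1 h2

def trelF {n} (x : Fin n) : StFormula n :=
  .all (.all (.all (fImp (.mem ((Fin.last n).castSucc.castSucc) x.castSucc.castSucc.castSucc)
    (fImp (.mem ((Fin.last (n+1)).castSucc) x.castSucc.castSucc.castSucc)
      (fImp (.mem (Fin.last (n+2)) x.castSucc.castSucc.castSucc)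
        (fImp (.mem ((Fin.last n).castSucc.castSucc) ((Fin.last (n+1)).castSucc))
          (fImp (.mem ((Fin.last (n+1)).castSucc) (Fin.last (n+2)))
            (.mem ((Fin.last n).castSucc.castSucc) (Fin.last (n+2))))))))))

@[simp] lemma eval_trelF {n} (x : Fin n) (val : Fin n → M) :
    EvalIn mem s C (trelF x) val ↔
      (∀ y z w, C y → C z → C w → mem y (val x) → mem z (val x) → mem w (val x) →
        mem y z → mem z w → mem y w) := by
  simp only [trelF, eval_all', eval_fImp, eval_mem', Fin.snoc_castSucc, Fin.snoc_last]
  constructor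
  · intro h y z w hy hz hw h1 h2 h3 h4 h5; exact h y hy z hz w hw h1 h2 h3 h4 h5
  · intro h y hy z hz w hw h1 h2 h3 h4 h5; exact h y z w hy hz hw h1 h2 h3 h4 h5

def irreflF {n} (x : Fin n) : StFormula n :=
  .all (fImp (.mem (Fin.last n) x.castSucc) (.not (.mem (Fin.last n) (Fin.last n))))

@[simp] lemma eval_irreflF {n} (x : Fin n) (val : Fin n → M) :
    EvalIn mem s C (irreflF x) val ↔
      (∀ y, C y → mem y (val x) → ¬ mem y y) := by
  simp [irreflF]

def ordF {n} (x : Fin n) : StFormula n :=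
  .and (transF x) (.and (linF x) (.and (trelF x) (.and (irreflF x) (wfF x))))

@[simp] lemma eval_ordF {n} (x : Fin n) (val : Fin n → M) :
    EvalIn mem s C (ordF x) val ↔ OrdIn mem C (val x) := by
  simp [ordF, OrdIn]

def natF {n} (x : Fin n) : StFormula n :=
  .and (ordF x) (.all (fImp (fOr (.eq (Fin.last n) x.castSucc) (.mem (Fin.last n) x.castSucc))
    (fOr (emptyF (Fin.last n))
      (fEx (succF ((Fin.last n).castSucc) (Fin.last (n+1)))))))

@[simp] lemma eval_natF {n} (x : Fin n) (val : Fin n → M) :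
    EvalIn mem s C (natF x) val ↔ NatIn mem C (val x) := by
  simp [natF, NatIn]

def finF {n} (x : Fin n) : StFormula n :=
  fEx (.and (natF (Fin.last n)) (equinumF x.castSucc (Fin.last n)))

@[simp] lemma eval_finF {n} (x : Fin n) (val : Fin n → M) :
    EvalIn mem s C (finF x) val ↔ FiniteIn mem C (val x) := by
  simp [finF, FiniteIn]

def ltF {n} (r a b : Fin n) : StFormula n :=
  fEx (.and (.mem (Fin.last n) r.castSucc)
    (opairF (Fin.last n) a.castSucc b.castSucc))

@[simp] lemma eval_ltF {n} (r a b : Fin n) (val : Fin n → M) :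
    EvalIn mem s C (ltF r a b) val ↔
      (∃ p, C p ∧ mem p (val r) ∧ OPairIn mem C p (val a) (val b)) := by
  simp [ltF]

def woF {n} (r x : Fin n) : StFormula n :=
  .and (.all (.all (fImp (.mem ((Fin.last n).castSucc) x.castSucc.castSucc)
    (fImp (.mem (Fin.last (n+1)) x.castSucc.castSucc)
      (fImp (.not (.eq ((Fin.last n).castSucc) (Fin.last (n+1))))
        (fOr (ltF r.castSucc.castSucc ((Fin.last n).castSucc) (Fin.last (n+1)))
          (ltF r.castSucc.castSucc (Fin.last (n+1)) ((Fin.last n).castSucc))))))))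
  (.and (.all (fImp (.mem (Fin.last n) x.castSucc)
      (.not (ltF r.castSucc (Fin.last n) (Fin.last n)))))
    (.and (.all (.all (.all (fImp
        (ltF r.castSucc.castSucc.castSucc ((Fin.last n).castSucc.castSucc)
          ((Fin.last (n+1)).castSucc))
        (fImp (ltF r.castSucc.castSucc.castSucc ((Fin.last (n+1)).castSucc) (Fin.last (n+2)))
          (ltF r.castSucc.castSucc.castSucc ((Fin.last n).castSucc.castSucc)
            (Fin.last (n+2))))))))
      (.all (fImp (subF (Fin.last n) x.castSucc)
        (fImp (fEx (.mem (Fin.last (n+1)) ((Fin.last n).castSucc)))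
          (fEx (.and (.mem (Fin.last (n+1)) ((Fin.last n).castSucc))
            (.all (fImp (.mem (Fin.last (n+2)) ((Fin.last n).castSucc.castSucc))
              (fImp (.not (.eq (Fin.last (n+2)) ((Fin.last (n+1)).castSucc)))
                (ltF r.castSucc.castSucc.castSucc ((Fin.last (n+1)).castSucc)
                  (Fin.last (n+2)))))))))))))

@[simp] lemma eval_woF {n} (r x : Fin n) (val : Fin n → M) :
    EvalIn mem s C (woF r x) val ↔ WOrdersIn mem C (val r) (val x) := by
  simp only [woF, eval_and', eval_all', eval_fImp, eval_fOr, eval_fEx, eval_not', eval_eq',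
    eval_mem', eval_subF, eval_ltF, Fin.snoc_castSucc, Fin.snoc_last, WOrdersIn]
  refine and_congr ?_ (and_congr ?_ (and_congr ?_ ?_))
  · constructor
    · intro h a b ha hb h1 h2 h3; exact h a ha b hb h1 h2 h3
    · intro h a ha b hb h1 h2 h3; exact h a b ha hb h1 h2 h3
  · exact Iff.rfl
  · constructor
    · rintro h a b c ha hb hc h1 h2; exact h a ha b hb c hc h1 h2
    · rintro h a ha b hb c hc h1 h2; exact h a b c ha hb hc h1 h2
  · constructor
    · rintro h Y hY hsub ⟨w, hw, hmem⟩
      obtain ⟨a, hA, h1, h2⟩ := h Y hY hsub ⟨w, hw, hmem⟩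
      exact ⟨a, hA, h1, fun b hb hbY hne => h2 b hb hbY hne⟩
    · rintro h Y hY hsub ⟨w, hw, hmem⟩
      obtain ⟨a, hA, h1, h2⟩ := h Y hY hsub ⟨w, hw, hmem⟩
      exact ⟨a, hA, h1, fun b hb hbY hne => h2 b hb hbY hne⟩

lemma isE_emptyF {n} (e : Fin n) : (emptyF e).IsEpsilon := by simp [emptyF]
lemma isE_subF {n} (x y : Fin n) : (subF x y).IsEpsilon := by simp [subF]
lemma isE_singF {n} (t x : Fin n) : (singF t x).IsEpsilon := by simp [singF]
lemma isE_upairF {n} (p x y : Fin n) : (upairF p x y).IsEpsilon := by simp [upairF]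
lemma isE_succF {n} (t x : Fin n) : (succF t x).IsEpsilon := by simp [succF]
lemma isE_transF {n} (x : Fin n) : (transF x).IsEpsilon := by simp [transF]
lemma isE_opairF {n} (p x y : Fin n) : (opairF p x y).IsEpsilon := by
  simp [opairF, isE_singF, isE_upairF]
lemma isE_fvalF {n} (f x y : Fin n) : (fvalF f x y).IsEpsilon := by
  simp [fvalF, isE_opairF]
lemma isE_funcOnMemF {n} (f d : Fin n) : (funcOnMemF f d).IsEpsilon := by
  simp [funcOnMemF, isE_opairF, isE_fvalF]
lemma isE_injOnF {n} (f : Fin n) : (injOnF f).IsEpsilon := by simp [injOnF, isE_fvalF]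
lemma isE_imgF {n} (f x y : Fin n) : (imgF f x y).IsEpsilon := by simp [imgF, isE_fvalF]
lemma isE_equinumF {n} (x y : Fin n) : (equinumF x y).IsEpsilon := by
  simp [equinumF, equinumBodyF, isE_funcOnMemF, isE_injOnF, isE_imgF]
lemma isE_wfF {n} (x : Fin n) : (wfF x).IsEpsilon := by simp [wfF, isE_subF]
lemma isE_ordF {n} (x : Fin n) : (ordF x).IsEpsilon := by
  simp [ordF, linF, trelF, irreflF, isE_transF, isE_wfF]
lemma isE_natF {n} (x : Fin n) : (natF x).IsEpsilon := by
  simp [natF, isE_ordF, isE_emptyF, isE_succF]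
lemma isE_finF {n} (x : Fin n) : (finF x).IsEpsilon := by
  simp [finF, isE_natF, isE_equinumF]
lemma isE_ltF {n} (r a b : Fin n) : (ltF r a b).IsEpsilon := by simp [ltF, isE_opairF]
lemma isE_woF {n} (r x : Fin n) : (woF r x).IsEpsilon := by
  simp [woF, isE_ltF, isE_subF]

end HSTF


namespace HSTF

open StFormula

variable {M : Type u} {mem : M → M → Prop} {stP : M → Prop} {s : M → Prop}

/-! #### The internality formula and relativization to the internal universe -/

def intFml {n} (i : Fin n) : StFormula n :=
  fEx (.and (.st (Fin.last n)) (.mem i.castSucc (Fin.last n)))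

@[simp] lemma eval_intFml {n} (i : Fin n) (val : Fin n → M) :
    EvalIn mem s TrueC (intFml i) val ↔ Internal mem s (val i) := by
  simp [intFml, Internal, TrueC]

def relInt : ∀ {n}, StFormula n → StFormula n
  | _, .mem i j => .mem i j
  | _, .eq i j => .eq i j
  | _, .st i => .st i
  | _, .not φ => .not (relInt φ)
  | _, .and φ ψ => .and (relInt φ) (relInt ψ)
  | n, .all φ => .all (fImp (intFml (Fin.last n)) (relInt φ))

lemma eval_relInt : ∀ {n} (φ : StFormula n) (val : Fin n → M),
    EvalIn mem stP TrueC (relInt φ) val ↔ EvalIn mem stP (Internal mem stP) φ val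
  | _, .mem i j, val => Iff.rfl
  | _, .eq i j, val => Iff.rfl
  | _, .st i, val => Iff.rfl
  | _, .not φ, val => by simp only [relInt, eval_not', eval_relInt φ val]
  | _, .and φ ψ, val => by
      simp only [relInt, eval_and', eval_relInt φ val, eval_relInt ψ val]
  | n, .all φ, val => by
      simp only [relInt, eval_all', eval_fImp, eval_intFml, Fin.snoc_last]
      constructor
      · intro h x hx; exact (eval_relInt φ _).mp (h x trivial hx)
      · intro h x _ hx; exact (eval_relInt φ _).mpr (h x hx)

section HSTLemmas

variable (hH : HSTModel mem stP)
include hH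

lemma st_internal {x : M} (hx : stP x) : Internal mem stP x := by
  obtain ⟨p, hp, hup⟩ := hH.zfc_st.pair x x hx hx
  exact ⟨p, hp, (hup x hx).2 (Or.inl rfl)⟩

lemma mem_internal {x y : M} (hx : Internal mem stP x) (h : mem y x) :
    Internal mem stP y := hH.internal_trans x y hx h

omit hH in lemma mem_st_internal {x y : M} (hx : stP x) (h : mem y x) :
    Internal mem stP y := ⟨x, hx, h⟩

/-- Transfer between the standard and the internal universe, for ∈-formulas
with standard parameter values. -/
lemma eval_st_iff_int : ∀ {n} (φ : StFormula n), φ.IsEpsilon →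
    ∀ (val : Fin n → M), (∀ i, stP (val i)) →
    (EvalIn mem FalseC stP φ val ↔ EvalIn mem FalseC (Internal mem stP) φ val)
  | _, .mem i j, _, val, _ => Iff.rfl
  | _, .eq i j, _, val, _ => Iff.rfl
  | _, .st i, h, val, _ => absurd h (isE_st i)
  | _, .not φ, h, val, hval => by
      simp only [eval_not', eval_st_iff_int φ h val hval]
  | _, .and φ ψ, h, val, hval => by
      simp only [eval_and', eval_st_iff_int φ h.1 val hval, eval_st_iff_int ψ h.2 val hval]
  | n, .all φ, h, val, hval => by
      simp only [eval_all']
      constructor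
      · intro hst
        by_contra hni
        push_neg at hni
        obtain ⟨x, hx, hnx⟩ := hni
        have hexi : ∃ x, Internal mem stP x ∧
            EvalIn mem FalseC (Internal mem stP) (.not φ) (Fin.snoc val x) := ⟨x, hx, hnx⟩
        obtain ⟨y, hy, hny⟩ := (hH.transfer (.not φ) h val hval).mp hexi
        have hvaly : ∀ i : Fin (n+1), stP ((Fin.snoc val y : Fin (n+1) → M) i) := by
          intro i; refine Fin.lastCases ?_ (fun j => ?_) i <;> simp [hy, hval]
        exact hny ((eval_st_iff_int φ h _ hvaly).mp (hst y hy))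
      · intro hint x hx
        have hvalx : ∀ i : Fin (n+1), stP ((Fin.snoc val x : Fin (n+1) → M) i) := by
          intro i; refine Fin.lastCases ?_ (fun j => ?_) i <;> simp [hx, hval]
        exact (eval_st_iff_int φ h _ hvalx).mpr (hint x (st_internal hH hx))

/-- Master transfer: a statement that holds in the standard universe for all
standard parameter values holds in the internal universe for all internal
parameter values. -/
lemma eval_int_of_st_aux : ∀ (k : ℕ) {n} (φ : StFormula n), φ.IsEpsilon →
    ∀ (val : Fin n → M), (∀ i : Fin n, (i : ℕ) < k → Internal mem stP (val i)) →
    (∀ i : Fin n, k ≤ (i : ℕ) → stP (val i)) →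
    (∀ w : Fin n → M, (∀ i, stP (w i)) → EvalIn mem FalseC stP φ w) →
    EvalIn mem FalseC (Internal mem stP) φ val := by
  intro k
  induction k with
  | zero =>
    intro n φ hφ val _ hst hyp
    exact (eval_st_iff_int hH φ hφ val (fun i => hst i (Nat.zero_le _))).mp
      (hyp val (fun i => hst i (Nat.zero_le _)))
  | succ k ih =>
    intro n φ hφ val hint hst hyp
    by_cases hn : n ≤ k
    · refine ih φ hφ val (fun i hik => hint i (Nat.lt_succ_of_lt hik)) ?_ hyp
      intro i hki
      exact absurd hki (Nat.not_le.mpr (Nat.lt_of_lt_of_le i.isLt hn))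
    · push_neg at hn
      set κ : Fin n := ⟨k, hn⟩ with hκ
      obtain ⟨X, hX, hmemX⟩ := hint κ (Nat.lt_succ_self k)
      set ρ : Fin n → Fin (n+1) := fun i => if i = κ then Fin.last n else i.castSucc with hρ
      set ψ : StFormula n := .all (fImp (.mem (Fin.last n) κ.castSucc) (φ.rename ρ)) with hψ
      have hψε : ψ.IsEpsilon := by
        simp only [hψ, isE_all, isE_fImp, isE_mem, isE_rename, true_and]
        exact hφ
      have key : ∀ (w : Fin n → M) (x : M),
          ((Fin.snoc w x : Fin (n+1) → M) ∘ ρ) = Function.update w κ x := by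
        intro w x; funext i
        by_cases hi : i = κ
        · subst hi
          simp [hρ, Function.comp, Fin.snoc_last]
        · simp [hρ, Function.comp, hi, Fin.snoc_castSucc, Function.update_of_ne hi]
      have hψeval : EvalIn mem FalseC (Internal mem stP) ψ (Function.update val κ X) := by
        refine ih ψ hψε _ ?_ ?_ ?_
        · intro i hik
          have hne : i ≠ κ := by
            intro hh; rw [hh] at hik; simp [hκ] at hik
          rw [Function.update_of_ne hne]
          exact hint i (Nat.lt_succ_of_lt hik)
        · intro i hki
          rcases eq_or_ne i κ with rfl | hne
          · rw [Function.update_self]; exact hX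
          · rw [Function.update_of_ne hne]
            refine hst i ?_
            have h1 : (i : ℕ) ≠ k := by
              intro hh; exact hne (Fin.ext (by simpa [hκ] using hh))
            omega
        · intro w hw
          simp only [hψ, eval_all', eval_fImp, eval_mem', Fin.snoc_last, Fin.snoc_castSucc,
            eval_rename]
          intro x hx hmem
          rw [key w x]
          refine hyp _ ?_
          intro i
          rcases eq_or_ne i κ with rfl | hne
          · rw [Function.update_self]; exact hx
          · rw [Function.update_of_ne hne]; exact hw i
      have := hψeval
      simp only [hψ, eval_all', eval_fImp, eval_mem', Fin.snoc_last, Fin.snoc_castSucc,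
        eval_rename] at this
      have h2 := this (val κ) (hint κ (Nat.lt_succ_self k))
        (by rw [Function.update_self]; exact hmemX)
      rw [key, Function.update_idem, Function.update_eq_self] at h2
      exact h2

/-- Statements provable in the standard universe hold in the internal universe
at internal parameter values. -/
lemma eval_int_params {n} (φ : StFormula n) (hφ : φ.IsEpsilon) (val : Fin n → M)
    (hval : ∀ i, Internal mem stP (val i))
    (hyp : ∀ w : Fin n → M, (∀ i, stP (w i)) → EvalIn mem FalseC stP φ w) :
    EvalIn mem FalseC (Internal mem stP) φ val :=
  eval_int_of_st_aux hH n φ hφ val (fun i _ => hval i)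
    (fun i h => absurd h (Nat.not_le.mpr i.isLt)) hyp

end HSTLemmas

end HSTF


namespace HSTF

open StFormula

variable {M : Type u} {mem : M → M → Prop} {stP : M → Prop}

section ZFCInt

variable (hH : HSTModel mem stP)
include hH

lemma ext_int {x y : M} (hx : Internal mem stP x) (hy : Internal mem stP y)
    (h : ∀ z, Internal mem stP z → (mem z x ↔ mem z y)) : x = y := by
  refine hH.ext x y fun z => ?_
  constructor
  · intro hz; exact (h z (mem_internal hH hx hz)).mp hz
  · intro hz; exact (h z (mem_internal hH hy hz)).mpr hz

lemma pair_int (x y : M) (hx : Internal mem stP x) (hy : Internal mem stP y) :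
    ∃ p, Internal mem stP p ∧ UPairIn mem (Internal mem stP) p x y := by
  have h := eval_int_params hH
    (fEx (upairF (Fin.last 2) ((0 : Fin 2).castSucc) ((1 : Fin 2).castSucc)))
    (by simp [isE_upairF]) ![x, y]
    (by intro i; fin_cases i <;> simpa)
    (by
      intro w hw
      simp only [eval_fEx, eval_upairF, Fin.snoc_last, Fin.snoc_castSucc]
      obtain ⟨p, hp, hup⟩ := hH.zfc_st.pair (w 0) (w 1) (hw 0) (hw 1)
      exact ⟨p, hp, hup⟩)
  simp only [eval_fEx, eval_upairF, Fin.snoc_last, Fin.snoc_castSucc] at h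
  simpa using h

lemma union_int (x : M) (hx : Internal mem stP x) :
    ∃ u, Internal mem stP u ∧ ∀ z, Internal mem stP z →
      (mem z u ↔ ∃ y, Internal mem stP y ∧ mem y x ∧ mem z y) := by
  have h := eval_int_params hH
    (fEx (.all (fIff (.mem (Fin.last 2) ((Fin.last 1).castSucc))
      (fEx (.and (.mem (Fin.last 3) ((0 : Fin 1).castSucc.castSucc.castSucc))
        (.mem ((Fin.last 2).castSucc) (Fin.last 3)))))))
    (by simp) ![x]
    (by intro i; fin_cases i <;> simpa)
    (by
      intro w hw
      simp only [eval_fEx, eval_all', eval_fIff, eval_and', eval_mem',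
        Fin.snoc_last, Fin.snoc_castSucc]
      obtain ⟨u, hu, hch⟩ := hH.zfc_st.union (w 0) (hw 0)
      refine ⟨u, hu, fun z hz => ?_⟩
      rw [hch z hz])
  simp only [eval_fEx, eval_all', eval_fIff, eval_and', eval_mem',
    Fin.snoc_last, Fin.snoc_castSucc] at h
  obtain ⟨u, hu, hch⟩ := h
  refine ⟨u, hu, fun z hz => ?_⟩
  simp only [Matrix.cons_val_zero] at hch
  exact hch z hz

lemma power_int (x : M) (hx : Internal mem stP x) :
    ∃ pw, Internal mem stP pw ∧ ∀ z, Internal mem stP z →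
      (mem z pw ↔ SubIn mem (Internal mem stP) z x) := by
  have h := eval_int_params hH
    (fEx (.all (fIff (.mem (Fin.last 2) ((Fin.last 1).castSucc))
      (subF (Fin.last 2) ((0 : Fin 1).castSucc.castSucc)))))
    (by simp [isE_subF]) ![x]
    (by intro i; fin_cases i <;> simpa)
    (by
      intro w hw
      simp only [eval_fEx, eval_all', eval_fIff, eval_subF,
        eval_mem', Fin.snoc_last, Fin.snoc_castSucc]
      obtain ⟨pw, hpw, hch⟩ := hH.zfc_st.power (w 0) (hw 0)
      exact ⟨pw, hpw, hch⟩)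
  simp only [eval_fEx, eval_all', eval_fIff, eval_subF, eval_mem',
    Fin.snoc_last, Fin.snoc_castSucc] at h
  simpa using h

lemma infinity_int :
    ∃ w, Internal mem stP w ∧
      (∃ e, Internal mem stP e ∧ mem e w ∧ EmptyIn mem (Internal mem stP) e) ∧
      ∀ x, Internal mem stP x → mem x w →
        ∃ t, Internal mem stP t ∧ mem t w ∧ SuccIn mem (Internal mem stP) t x := by
  have h := eval_int_params hH
    (fEx (.and
      (fEx (.and (.mem (Fin.last 1) ((Fin.last 0).castSucc)) (emptyF (Fin.last 1))))
      (.all (fImp (.mem (Fin.last 1) ((Fin.last 0).castSucc))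
        (fEx (.and (.mem (Fin.last 2) ((Fin.last 0).castSucc.castSucc))
          (succF (Fin.last 2) ((Fin.last 1).castSucc))))))))
    (by simp [isE_emptyF, isE_succF]) Fin.elim0
    (by intro i; exact i.elim0)
    (by
      intro w hw
      simp only [eval_fEx, eval_and', eval_all', eval_fImp, eval_mem', eval_emptyF,
        eval_succF, Fin.snoc_last, Fin.snoc_castSucc]
      obtain ⟨W, hW, ⟨e, he, hew, hee⟩, hsucc⟩ := hH.zfc_st.infinity
      refine ⟨W, hW, ⟨e, he, hew, hee⟩, fun x hx hxW => ?_⟩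
      obtain ⟨t, ht, htW, hts⟩ := hsucc x hx hxW
      exact ⟨t, ht, htW, hts⟩)
  simp only [eval_fEx, eval_and', eval_all', eval_fImp, eval_mem', eval_emptyF,
    eval_succF, Fin.snoc_last, Fin.snoc_castSucc] at h
  obtain ⟨W, hW, ⟨e, he, hew, hee⟩, hsucc⟩ := h
  exact ⟨W, hW, ⟨e, he, hew, hee⟩, hsucc⟩

lemma foundation_int (x : M) (hx : Internal mem stP x)
    (hne : ∃ y, Internal mem stP y ∧ mem y x) :
    ∃ y, Internal mem stP y ∧ mem y x ∧
      ∀ z, Internal mem stP z → mem z y → ¬ mem z x := by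
  have h := eval_int_params hH
    (fImp (fEx (.mem (Fin.last 1) ((0 : Fin 1).castSucc)))
      (fEx (.and (.mem (Fin.last 1) ((0 : Fin 1).castSucc))
        (.all (fImp (.mem (Fin.last 2) ((Fin.last 1).castSucc))
          (.not (.mem (Fin.last 2) ((0 : Fin 1).castSucc.castSucc))))))))
    (by simp) ![x]
    (by intro i; fin_cases i <;> simpa)
    (by
      intro w hw
      simp only [eval_fImp, eval_fEx, eval_and', eval_all', eval_not', eval_mem',
        Fin.snoc_last, Fin.snoc_castSucc]
      rintro ⟨y, hy, hyx⟩
      obtain ⟨y', h1, h2, h3⟩ := hH.zfc_st.foundation (w 0) (hw 0) ⟨y, hy, hyx⟩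
      exact ⟨y', h1, h2, h3⟩)
  simp only [eval_fImp, eval_fEx, eval_and', eval_all', eval_not', eval_mem',
    Fin.snoc_last, Fin.snoc_castSucc, Matrix.cons_val_zero] at h
  exact h hne

lemma separation_int {n} (φ : StFormula (n + 1)) (hφ : φ.IsEpsilon)
    (val : Fin n → M) (hval : ∀ i, Internal mem stP (val i)) (x : M)
    (hx : Internal mem stP x) :
    ∃ t, Internal mem stP t ∧ ∀ z, Internal mem stP z →
      (mem z t ↔ mem z x ∧ EvalIn mem FalseC (Internal mem stP) φ (Fin.snoc val z)) := by
  set ρ : Fin (n+1) → Fin (n+3) :=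
    Fin.snoc (fun i : Fin n => i.castSucc.castSucc.castSucc) (Fin.last (n+2)) with hρ
  have hcomp : ∀ (w : Fin (n+1) → M) (s' z : M),
      ((Fin.snoc (Fin.snoc w s') z : Fin (n+3) → M) ∘ ρ)
        = Fin.snoc (fun i : Fin n => w i.castSucc) z := by
    intro w s' z; funext i
    refine Fin.lastCases ?_ (fun j => ?_) i <;>
      simp [hρ, Fin.snoc_castSucc, Fin.snoc_last]
  have h := eval_int_params hH
    (fEx (.all (fIff (.mem (Fin.last (n+2)) ((Fin.last (n+1)).castSucc))
      (.and (.mem (Fin.last (n+2)) ((Fin.last n).castSucc.castSucc)) (φ.rename ρ)))))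
    (by simp [isE_rename, hφ]) (Fin.snoc val x)
    (by
      intro i
      refine Fin.lastCases ?_ (fun j => ?_) i <;> simp [hx, hval])
    (by
      intro w hw
      simp only [eval_fEx, eval_all', eval_fIff, eval_and', eval_mem', eval_rename,
        Fin.snoc_last, Fin.snoc_castSucc]
      obtain ⟨t, ht, hch⟩ := hH.zfc_st.separation φ hφ (fun i => w i.castSucc)
        (fun i => hw _) (w (Fin.last n)) (hw _)
      refine ⟨t, ht, fun z hz => ?_⟩
      rw [hcomp w t z]
      exact hch z hz)
  simp only [eval_fEx, eval_all', eval_fIff, eval_and', eval_mem', eval_rename,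
    Fin.snoc_last, Fin.snoc_castSucc] at h
  obtain ⟨t, ht, hch⟩ := h
  refine ⟨t, ht, fun z hz => ?_⟩
  have := hch z hz
  rw [hcomp (Fin.snoc val x) t z] at this
  have hval' : (fun i : Fin n => (Fin.snoc val x : Fin (n+1) → M) i.castSucc) = val := by
    funext i; simp [Fin.snoc_castSucc]
  rw [hval'] at this
  exact this

lemma collection_int {n} (φ : StFormula (n + 2)) (hφ : φ.IsEpsilon)
    (val : Fin n → M) (hval : ∀ i, Internal mem stP (val i)) (x : M)
    (hx : Internal mem stP x) :
    ∃ B, Internal mem stP B ∧ ∀ a, Internal mem stP a → mem a x →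
      (∃ b, Internal mem stP b ∧
        EvalIn mem FalseC (Internal mem stP) φ (Fin.snoc (Fin.snoc val a) b)) →
      ∃ b, Internal mem stP b ∧ mem b B ∧
        EvalIn mem FalseC (Internal mem stP) φ (Fin.snoc (Fin.snoc val a) b) := by
  set ρ : Fin (n+2) → Fin (n+4) :=
    Fin.snoc (Fin.snoc (fun i : Fin n => i.castSucc.castSucc.castSucc.castSucc)
      ((Fin.last (n+2)).castSucc)) (Fin.last (n+3)) with hρ
  have hcomp : ∀ (w : Fin (n+1) → M) (B a b : M),
      (((Fin.snoc (Fin.snoc (Fin.snoc w B) a) b : Fin (n+4) → M)) ∘ ρ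
        = Fin.snoc (Fin.snoc (fun i : Fin n => w i.castSucc) a) b) := by
    intro w B a b; funext i
    refine Fin.lastCases ?_ (fun j => ?_) i
    · simp [hρ, Fin.snoc_last, Fin.snoc_castSucc]
    · refine Fin.lastCases ?_ (fun j' => ?_) j <;>
        simp [hρ, Fin.snoc_last, Fin.snoc_castSucc]
  have h := eval_int_params hH
    (fEx (.all (fImp (.mem (Fin.last (n+2)) ((Fin.last n).castSucc.castSucc))
      (fImp (fEx (φ.rename ρ))
        (fEx (.and (.mem (Fin.last (n+3)) ((Fin.last (n+1)).castSucc.castSucc))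
          (φ.rename ρ)))))))
    (by simp [isE_rename, hφ]) (Fin.snoc val x)
    (by
      intro i
      refine Fin.lastCases ?_ (fun j => ?_) i <;> simp [hx, hval])
    (by
      intro w hw
      simp only [eval_fEx, eval_all', eval_fImp, eval_and', eval_mem', eval_rename,
        Fin.snoc_last, Fin.snoc_castSucc]
      obtain ⟨B, hB, hch⟩ := hH.zfc_st.collection φ hφ (fun i => w i.castSucc)
        (fun i => hw _) (w (Fin.last n)) (hw _)
      refine ⟨B, hB, fun a ha hax hex => ?_⟩
      have hex' : ∃ b, stP b ∧
          EvalIn mem FalseC stP φ (Fin.snoc (Fin.snoc (fun i => w i.castSucc) a) b) := by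
        obtain ⟨b, hb, hbe⟩ := hex
        rw [hcomp w B a b] at hbe
        exact ⟨b, hb, hbe⟩
      obtain ⟨b, hb, hbB, hbe⟩ := hch a ha hax hex'
      refine ⟨b, hb, hbB, ?_⟩
      rw [hcomp w B a b]
      exact hbe)
  simp only [eval_fEx, eval_all', eval_fImp, eval_and', eval_mem', eval_rename,
    Fin.snoc_last, Fin.snoc_castSucc] at h
  obtain ⟨B, hB, hch⟩ := h
  have hval' : (fun i : Fin n => (Fin.snoc val x : Fin (n+1) → M) i.castSucc) = val := by
    funext i; simp [Fin.snoc_castSucc]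
  refine ⟨B, hB, fun a ha hax hex => ?_⟩
  have hex' : ∃ b, Internal mem stP b ∧
      EvalIn mem FalseC (Internal mem stP) φ
        ((Fin.snoc (Fin.snoc (Fin.snoc (Fin.snoc val x) B) a) b : Fin (n+4) → M)
          ∘ ρ) := by
    obtain ⟨b, hb, hbe⟩ := hex
    refine ⟨b, hb, ?_⟩
    rw [hcomp (Fin.snoc val x) B a b, hval']
    exact hbe
  obtain ⟨b, hb, hbB, hbe⟩ := hch a ha hax hex'
  rw [hcomp (Fin.snoc val x) B a b, hval'] at hbe
  exact ⟨b, hb, hbB, hbe⟩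

lemma choice_wo_int (x : M) (hx : Internal mem stP x) :
    ∃ r, Internal mem stP r ∧ WOrdersIn mem (Internal mem stP) r x := by
  have h := eval_int_params hH
    (fEx (woF (Fin.last 1) ((0 : Fin 1).castSucc)))
    (by simp [isE_woF]) ![x]
    (by intro i; fin_cases i <;> simpa)
    (by
      intro w hw
      simp only [eval_fEx, eval_woF, Fin.snoc_last, Fin.snoc_castSucc]
      exact hH.zfc_st.choice_wo (w 0) (hw 0))
  simp only [eval_fEx, eval_woF, Fin.snoc_last, Fin.snoc_castSucc,
    Matrix.cons_val_zero] at h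
  exact h

/-- The internal universe is a model of ZFC. -/
lemma zfc_int : ZFCModelIn mem (Internal mem stP) where
  nonemp := by
    obtain ⟨x, hx⟩ := hH.zfc_st.nonemp
    exact ⟨x, st_internal hH hx⟩
  ext := fun x y hx hy h => ext_int hH hx hy h
  pair := fun x y hx hy => pair_int hH x y hx hy
  union := fun x hx => union_int hH x hx
  power := fun x hx => power_int hH x hx
  infinity := infinity_int hH
  foundation := fun x hx hne => foundation_int hH x hx hne
  separation := fun φ hφ val hval x hx => separation_int hH φ hφ val hval x hx
  collection := fun φ hφ val hval x hx => collection_int hH φ hφ val hval x hx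
  choice_wo := fun x hx => choice_wo_int hH x hx

end ZFCInt

end HSTF


namespace HSTF

open StFormula

variable {M : Type u} {mem : M → M → Prop} {stP : M → Prop}

/-! #### Ordered pairs -/

lemma opair_inj {C : M → Prop} {p x y x' y' : M}
    (hx : C x) (hy : C y) (hx' : C x') (hy' : C y')
    (h1 : OPairIn mem C p x y) (h2 : OPairIn mem C p x' y') : x = x' ∧ y = y' := by
  obtain ⟨s, t, hs, ht, hsx, htxy, hpst⟩ := h1
  obtain ⟨s', t', hs', ht', hsx', htxy', hpst'⟩ := h2
  have hs'c : s' = s ∨ s' = t := (hpst s' hs').mp ((hpst' s' hs').mpr (Or.inl rfl))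
  have ht'c : t' = s ∨ t' = t := (hpst t' ht').mp ((hpst' t' ht').mpr (Or.inr rfl))
  have htc2 : t = s' ∨ t = t' := (hpst' t ht).mp ((hpst t ht).mpr (Or.inr rfl))
  have hx's' : mem x' s' := (hsx' x' hx').mpr rfl
  have hxx' : x = x' := by
    rcases hs'c with h | h
    · exact ((hsx x' hx').mp (h ▸ hx's')).symm
    · have hxt : mem x t := (htxy x hx).mpr (Or.inl rfl)
      exact (hsx' x hx).mp (h ▸ hxt)
  subst hxx'
  refine ⟨rfl, ?_⟩
  have hy't' : mem y' t' := (htxy' y' hy').mpr (Or.inr rfl)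
  rcases ht'c with h | h
  · have hy'x : y' = x := (hsx y' hy').mp (h ▸ hy't')
    have hyx : y = x := by
      have hyt : mem y t := (htxy y hy).mpr (Or.inr rfl)
      rcases htc2 with h2 | h2
      · exact (hsx' y hy).mp (h2 ▸ hyt)
      · exact (hsx y hy).mp ((h2.trans h) ▸ hyt)
    rw [hyx, hy'x]
  · rcases (htxy y' hy').mp (h ▸ hy't') with h2 | h2
    · have hyt' : mem y t' := h.symm ▸ ((htxy y hy).mpr (Or.inr rfl))
      rcases (htxy' y hy).mp hyt' with h3 | h3
      · rw [h2, h3]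
      · exact h3
    · exact h2.symm

section WithH

variable (hH : HSTModel mem stP)
include hH

lemma opair_ext {p p' x y : M}
    (h1 : OPairIn mem TrueC p x y) (h2 : OPairIn mem TrueC p' x y) : p = p' := by
  obtain ⟨s, t, -, -, hsx, htxy, hpst⟩ := h1
  obtain ⟨s', t', -, -, hsx', htxy', hpst'⟩ := h2
  have hss : s = s' := hH.ext s s' fun z => by
    rw [hsx z trivial, hsx' z trivial]
  have htt : t = t' := hH.ext t t' fun z => by
    rw [htxy z trivial, htxy' z trivial]
  refine hH.ext p p' fun z => ?_
  rw [hpst z trivial, hpst' z trivial, hss, htt]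

lemma mk_opair (x y : M) : ∃ p, OPairIn mem TrueC p x y := by
  obtain ⟨s, hs⟩ := hH.pairing x x
  obtain ⟨t, ht⟩ := hH.pairing x y
  obtain ⟨p, hp⟩ := hH.pairing s t
  refine ⟨p, s, t, trivial, trivial, ?_, ht, hp⟩
  intro z _
  rw [hs z trivial]
  simp

lemma opair_int (x y : M) (hx : Internal mem stP x) (hy : Internal mem stP y) :
    ∃ p, Internal mem stP p ∧ OPairIn mem (Internal mem stP) p x y := by
  obtain ⟨s, hsI, hs⟩ := pair_int hH x x hx hx
  obtain ⟨t, htI, ht⟩ := pair_int hH x y hx hy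
  obtain ⟨p, hpI, hp⟩ := pair_int hH s t hsI htI
  refine ⟨p, hpI, s, t, hsI, htI, ?_, ht, hp⟩
  intro z hz
  rw [hs z hz]
  simp

/-- `x ∪ {y}` inside the internal universe. -/
lemma union_insert_int (x y : M) (hx : Internal mem stP x) (hy : Internal mem stP y) :
    ∃ u, Internal mem stP u ∧ ∀ z, Internal mem stP z →
      (mem z u ↔ mem z x ∨ z = y) := by
  obtain ⟨sy, hsyI, hsy⟩ := pair_int hH y y hy hy
  obtain ⟨q, hqI, hq⟩ := pair_int hH x sy hx hsyI
  obtain ⟨u, huI, hu⟩ := union_int hH q hqI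
  refine ⟨u, huI, fun z hz => ?_⟩
  rw [hu z hz]
  constructor
  · rintro ⟨w, hwI, hwq, hzw⟩
    rcases (hq w hwI).mp hwq with rfl | rfl
    · exact Or.inl hzw
    · exact Or.inr (((hsy z hz).mp hzw).elim id id)
  · rintro (hzx | rfl)
    · exact ⟨x, hx, (hq x hx).mpr (Or.inl rfl), hzx⟩
    · exact ⟨sy, hsyI, (hq sy hsyI).mpr (Or.inr rfl), (hsy z hz).mpr (Or.inl rfl)⟩

lemma succ_int (x : M) (hx : Internal mem stP x) :
    ∃ u, Internal mem stP u ∧ SuccIn mem (Internal mem stP) u x := by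
  obtain ⟨u, huI, hu⟩ := union_insert_int hH x x hx hx
  exact ⟨u, huI, hu⟩

/-- Intersection with a set, inside the internal universe. -/
lemma inter_int (Y v : M) (hY : Internal mem stP Y) (hv : Internal mem stP v) :
    ∃ Z, Internal mem stP Z ∧ ∀ z, Internal mem stP z →
      (mem z Z ↔ mem z Y ∧ mem z v) := by
  obtain ⟨Z, hZ, hch⟩ := separation_int hH
    (.mem (Fin.last 1) ((0 : Fin 1).castSucc)) trivial ![v]
    (by intro i; fin_cases i <;> simpa) Y hY
  refine ⟨Z, hZ, fun z hz => ?_⟩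
  rw [hch z hz]
  simp only [eval_mem', Fin.snoc_last, Fin.snoc_castSucc, Matrix.cons_val_zero]

end WithH

/-! #### Natural numbers relative to a class -/

section NatLemmas

variable {C : M → Prop}

lemma nat_not_mem_self {ν : M} (hν : NatIn mem C ν) (hνC : C ν) : ¬ mem ν ν := by
  intro h
  exact hν.1.2.2.2.1 ν hνC h h

lemma nat_mem_nat {ν μ : M} (hν : NatIn mem C ν) (hμC : C μ) (hμ : mem μ ν) :
    NatIn mem C μ := by
  obtain ⟨⟨htr, hlin, htrel, hirr, hwf⟩, hcl⟩ := hν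
  have hsub : ∀ z, C z → mem z μ → mem z ν := fun z hz hzμ => htr μ hμC hμ z hz hzμ
  refine ⟨⟨?_, ?_, ?_, ?_, ?_⟩, ?_⟩
  · intro y hy hyμ z hz hzy
    have hyν : mem y ν := hsub y hy hyμ
    have hzν : mem z ν := htr y hy hyν z hz hzy
    exact htrel z y μ hz hy hμC hzν hyν hμ hzy hyμ
  · intro y z hy hz hyμ hzμ
    exact hlin y z hy hz (hsub y hy hyμ) (hsub z hz hzμ)
  · intro y z w hy hz hw hyμ hzμ hwμ
    exact htrel y z w hy hz hw (hsub y hy hyμ) (hsub z hz hzμ) (hsub w hw hwμ)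
  · intro y hy hyμ
    exact hirr y hy (hsub y hy hyμ)
  · intro Y hY hYsub hne
    exact hwf Y hY (fun z hz hzY => hsub z hz (hYsub z hz hzY)) hne
  · intro y hy hcase
    rcases hcase with rfl | hyμ
    · exact hcl y hy (Or.inr hμ)
    · exact hcl y hy (Or.inr (hsub y hy hyμ))

lemma nat_succ
    (hel : ∀ x y, C x → mem y x → C y)
    (hsepC : ∀ Y v, C Y → C v → ∃ Z, C Z ∧ ∀ z, C z → (mem z Z ↔ mem z Y ∧ mem z v))
    {ν ν' : M} (hν : NatIn mem C ν) (hνC : C ν) (hν'C : C ν')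
    (hsucc : SuccIn mem C ν' ν) : NatIn mem C ν' := by
  obtain ⟨⟨htr, hlin, htrel, hirr, hwf⟩, hcl⟩ := hν
  have hννν : ¬ mem ν ν := by
    intro h; exact hirr ν hνC h h
  refine ⟨⟨?_, ?_, ?_, ?_, ?_⟩, ?_⟩
  · -- transitive
    intro y hy hyν' z hz hzy
    rcases (hsucc y hy).mp hyν' with hyν | rfl
    · exact (hsucc z hz).mpr (Or.inl (htr y hy hyν z hz hzy))
    · exact (hsucc z hz).mpr (Or.inl hzy)
  · -- linear
    intro y z hy hz hyν' hzν'
    rcases (hsucc y hy).mp hyν' with hyν | rfl <;>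
      rcases (hsucc z hz).mp hzν' with hzν | h
    · exact hlin y z hy hz hyν hzν
    · subst h; exact Or.inl hyν
    · exact Or.inr (Or.inr hzν)
    · exact Or.inr (Or.inl h.symm)
  · -- transitivity of the relation
    intro y z w hy hz hw hyν' hzν' hwν' hyz hzw
    rcases (hsucc w hw).mp hwν' with hwν | rfl
    · have hzν : mem z ν := htr w hw hwν z hz hzw
      have hyν : mem y ν := htr z hz hzν y hy hyz
      exact htrel y z w hy hz hw hyν hzν hwν hyz hzw
    · rcases (hsucc z hz).mp hzν' with hzν | rfl
      · exact htr z hz hzν y hy hyz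
      · exact hyz
  · -- irreflexive
    intro y hy hyν'
    rcases (hsucc y hy).mp hyν' with hyν | rfl
    · exact hirr y hy hyν
    · exact hννν
  · -- well-founded
    intro Y hY hYsub hne
    obtain ⟨Z, hZC, hZch⟩ := hsepC Y ν hY hνC
    by_cases hz : ∃ w, C w ∧ mem w Z
    · obtain ⟨w, hwC, hwZ, hwmin⟩ := hwf Z hZC
        (fun z hzC hzZ => ((hZch z hzC).mp hzZ).2) hz
      have hwY : mem w Y := ((hZch w hwC).mp hwZ).1
      have hwν : mem w ν := ((hZch w hwC).mp hwZ).2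
      refine ⟨w, hwC, hwY, fun u huC huw => ?_⟩
      intro huY
      have huν : mem u ν := htr w hwC hwν u huC huw
      exact hwmin u huC huw ((hZch u huC).mpr ⟨huY, huν⟩)
    · obtain ⟨w₀, hw₀C, hw₀Y⟩ := hne
      have hw₀ν' : mem w₀ ν' := hYsub w₀ hw₀C hw₀Y
      have hw₀ν : w₀ = ν := by
        rcases (hsucc w₀ hw₀C).mp hw₀ν' with h | h
        · exact absurd ⟨w₀, hw₀C, (hZch w₀ hw₀C).mpr ⟨hw₀Y, h⟩⟩ hz
        · exact h
      subst hw₀ν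
      refine ⟨w₀, hw₀C, hw₀Y, fun u huC huw => ?_⟩
      intro huY
      exact hz ⟨u, huC, (hZch u huC).mpr ⟨huY, huw⟩⟩
  · -- every smaller number is empty or a successor
    intro y hy hcase
    rcases hcase with rfl | hyν'
    · exact Or.inr ⟨ν, hνC, hsucc⟩
    · rcases (hsucc y hy).mp hyν' with hyν | rfl
      · exact hcl y hy (Or.inr hyν)
      · exact hcl y hy (Or.inl rfl)

end NatLemmas

section FinLemmas

variable (hH : HSTModel mem stP)
include hH

/-- A standard set with no elements at all. -/
lemma exists_st_empty : ∃ e, stP e ∧ EmptyIn mem TrueC e := by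
  obtain ⟨x₀, hx₀⟩ := hH.zfc_st.nonemp
  obtain ⟨e, he, hch⟩ := hH.zfc_st.separation
    (.not (.eq (Fin.last 0) (Fin.last 0))) trivial Fin.elim0 (fun i => i.elim0) x₀ hx₀
  have hst : EmptyIn mem stP e := by
    intro z hz hze
    exact ((hch z hz).mp hze).2 rfl
  have hint : EmptyIn mem (Internal mem stP) e := by
    have h := (eval_st_iff_int hH (emptyF (0 : Fin 1)) (isE_emptyF _) ![e]
      (by intro i; fin_cases i <;> simpa)).mp (by simpa using hst)
    simpa using h
  refine ⟨e, he, ?_⟩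
  intro z _ hze
  exact hint z ⟨e, he, hze⟩ hze

omit hH in
lemma fin_of_empty {e : M} (he : Internal mem stP e)
    (hemp : EmptyIn mem (Internal mem stP) e) :
    FiniteIn mem (Internal mem stP) e := by
  refine ⟨e, he, ⟨⟨?_, ?_, ?_, ?_, ?_⟩, ?_⟩, ?_⟩
  · intro y hy hye; exact absurd hye (hemp y hy)
  · intro y z hy hz hye; exact absurd hye (hemp y hy)
  · intro y z w hy hz hw hye; exact absurd hye (hemp y hy)
  · intro y hy hye; exact absurd hye (hemp y hy)
  · intro Y hY hsub hne
    obtain ⟨w, hwC, hwY⟩ := hne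
    exact absurd (hsub w hwC hwY) (hemp w hwC)
  · intro y hy hcase
    rcases hcase with rfl | hye
    · exact Or.inl hemp
    · exact absurd hye (hemp y hy)
  · refine ⟨e, he, ⟨?_, ?_, ?_⟩, ?_, ?_⟩
    · intro p hp hpe; exact absurd hpe (hemp p hp)
    · intro x hx hxe; exact absurd hxe (hemp x hx)
    · rintro x y y' hx hy hy' ⟨p, hp, hpe, -⟩; exact absurd hpe (hemp p hp)
    · rintro a b w ha hb hw ⟨p, hp, hpe, -⟩; exact absurd hpe (hemp p hp)
    · intro w hw
      constructor
      · intro hwe; exact absurd hwe (hemp w hw)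
      · rintro ⟨a, ha, hae, -⟩; exact absurd hae (hemp a ha)

end FinLemmas

end HSTF


namespace HSTF

open StFormula

variable {M : Type u} {mem : M → M → Prop} {stP : M → Prop}

@[simp] lemma fin_snoc_zero' {α : Sort*} (p : Fin 0 → α) (z : α) :
    (Fin.snoc p z : Fin 1 → α) 0 = z := by
  have h : (0 : Fin 1) = Fin.last 0 := rfl
  rw [h, Fin.snoc_last]

section FinInsert

variable (hH : HSTModel mem stP)
include hH

lemma fin_insert {A b u : M} (hAI : Internal mem stP A) (hbI : Internal mem stP b)
    (huI : Internal mem stP u) (hA : FiniteIn mem (Internal mem stP) A)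
    (hch : ∀ z, Internal mem stP z → (mem z u ↔ mem z A ∨ z = b)) :
    FiniteIn mem (Internal mem stP) u := by
  by_cases hbA : mem b A
  · have hu : u = A := ext_int hH huI hAI (fun z hz => by
      rw [hch z hz]
      constructor
      · rintro (h | rfl); exacts [h, hbA]
      · exact Or.inl)
    rw [hu]; exact hA
  · obtain ⟨ν, hνI, hνNat, f, hfI, hfFun, hfInj, hfImg⟩ := hA
    obtain ⟨ν', hν'I, hν'succ⟩ := succ_int hH ν hνI
    obtain ⟨p₀, hp₀I, hp₀⟩ := opair_int hH b ν hbI hνI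
    obtain ⟨f', hf'I, hf'ch⟩ := union_insert_int hH f p₀ hfI hp₀I
    have hνν : ¬ mem ν ν := nat_not_mem_self hνNat hνI
    have hfval : ∀ z w, Internal mem stP z → Internal mem stP w →
        (FValIn mem (Internal mem stP) f' z w ↔
          (FValIn mem (Internal mem stP) f z w ∨ (z = b ∧ w = ν))) := by
      intro z w hz hw
      constructor
      · rintro ⟨p, hpI, hpf', hop⟩
        rcases (hf'ch p hpI).mp hpf' with hpf | rfl
        · exact Or.inl ⟨p, hpI, hpf, hop⟩
        · exact Or.inr (opair_inj hz hw hbI hνI hop hp₀)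
      · rintro (⟨p, hpI, hpf, hop⟩ | ⟨rfl, rfl⟩)
        · exact ⟨p, hpI, (hf'ch p hpI).mpr (Or.inl hpf), hop⟩
        · exact ⟨p₀, hp₀I, (hf'ch p₀ hp₀I).mpr (Or.inr rfl), hp₀⟩
    have hdom : ∀ z w, Internal mem stP z → Internal mem stP w →
        FValIn mem (Internal mem stP) f z w → mem z A ∧ mem w ν := by
      intro z w hz hw hfv
      obtain ⟨p, hpI, hpf, hop⟩ := hfv
      obtain ⟨x₀, y₀, hx₀, hy₀, hx₀A, hop₀⟩ := hfFun.1 p hpI hpf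
      obtain ⟨rfl, rfl⟩ := opair_inj hz hw hx₀ hy₀ hop hop₀
      exact ⟨hx₀A, (hfImg w hw).mpr ⟨z, hz, hx₀A, ⟨p, hpI, hpf, hop⟩⟩⟩
    have hνNat' : NatIn mem (Internal mem stP) ν' :=
      nat_succ (fun x y hx h => mem_internal hH hx h)
        (fun Y v hY hv => inter_int hH Y v hY hv) hνNat hνI hν'I hν'succ
    refine ⟨ν', hν'I, hνNat', f', hf'I, ⟨?_, ?_, ?_⟩, ?_, ?_⟩
    · intro p hpI hpf'
      rcases (hf'ch p hpI).mp hpf' with hpf | rfl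
      · obtain ⟨x₀, y₀, hx₀, hy₀, hx₀A, hop₀⟩ := hfFun.1 p hpI hpf
        exact ⟨x₀, y₀, hx₀, hy₀, (hch x₀ hx₀).mpr (Or.inl hx₀A), hop₀⟩
      · exact ⟨b, ν, hbI, hνI, (hch b hbI).mpr (Or.inr rfl), hp₀⟩
    · intro x hx hxu
      rcases (hch x hx).mp hxu with hxA | rfl
      · obtain ⟨y, hyI, hfv⟩ := hfFun.2.1 x hx hxA
        exact ⟨y, hyI, (hfval x y hx hyI).mpr (Or.inl hfv)⟩
      · exact ⟨ν, hνI, (hfval x ν hx hνI).mpr (Or.inr ⟨rfl, rfl⟩)⟩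
    · intro x y y' hx hy hy' h1 h2
      rcases (hfval x y hx hy).mp h1 with hf1 | ⟨rfl, rfl⟩
      · rcases (hfval x y' hx hy').mp h2 with hf2 | ⟨rfl, rfl⟩
        · exact hfFun.2.2 x y y' hx hy hy' hf1 hf2
        · exact absurd (hdom x y hx hy hf1).1 hbA
      · rcases (hfval x y' hx hy').mp h2 with hf2 | ⟨-, rfl⟩
        · exact absurd (hdom x y' hx hy' hf2).1 hbA
        · rfl
    · intro a a' w ha ha' hw h1 h2
      rcases (hfval a w ha hw).mp h1 with hf1 | ⟨ha1, hw1⟩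
      · rcases (hfval a' w ha' hw).mp h2 with hf2 | ⟨ha2, hw2⟩
        · exact hfInj a a' w ha ha' hw hf1 hf2
        · exact absurd (hw2 ▸ (hdom a w ha hw hf1).2) hνν
      · rcases (hfval a' w ha' hw).mp h2 with hf2 | ⟨ha2, hw2⟩
        · exact absurd (hw1 ▸ (hdom a' w ha' hw hf2).2) hνν
        · rw [ha1, ha2]
    · intro w hw
      constructor
      · intro hwν'
        rcases (hν'succ w hw).mp hwν' with hwν | rfl
        · obtain ⟨a, haI, haA, hfv⟩ := (hfImg w hw).mp hwν
          exact ⟨a, haI, (hch a haI).mpr (Or.inl haA),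
            (hfval a w haI hw).mpr (Or.inl hfv)⟩
        · exact ⟨b, hbI, (hch b hbI).mpr (Or.inr rfl),
            (hfval b w hbI hw).mpr (Or.inr ⟨rfl, rfl⟩)⟩
      · rintro ⟨a, haI, hau, hfv⟩
        rcases (hfval a w haI hw).mp hfv with hf1 | ⟨rfl, rfl⟩
        · exact (hν'succ w hw).mpr (Or.inl (hdom a w haI hw hf1).2)
        · exact (hν'succ w hw).mpr (Or.inr rfl)

/-- For a standard set, there is a standard successor (in the internal sense). -/
lemma st_succ (ν : M) (hν : stP ν) :
    ∃ t, stP t ∧ SuccIn mem (Internal mem stP) t ν := by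
  obtain ⟨P, hP, hPch⟩ := hH.zfc_st.pair ν ν hν hν
  obtain ⟨Q, hQ, hQch⟩ := hH.zfc_st.pair ν P hν hP
  obtain ⟨t, ht, htch⟩ := hH.zfc_st.union Q hQ
  have hstsucc : SuccIn mem stP t ν := by
    intro z hz
    rw [htch z hz]
    constructor
    · rintro ⟨y, hy, hyQ, hzy⟩
      rcases (hQch y hy).mp hyQ with rfl | rfl
      · exact Or.inl hzy
      · exact Or.inr (((hPch z hz).mp hzy).elim id id)
    · rintro (hzν | rfl)
      · exact ⟨ν, hν, (hQch ν hν).mpr (Or.inl rfl), hzν⟩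
      · exact ⟨P, hP, (hQch P hP).mpr (Or.inr rfl), (hPch z hz).mpr (Or.inl rfl)⟩
  refine ⟨t, ht, ?_⟩
  have h := (eval_st_iff_int hH (succF (0 : Fin 2) (1 : Fin 2))
    (isE_succF (0 : Fin 2) (1 : Fin 2)) ![t, ν]
    (by intro i; fin_cases i; exacts [ht, hν])).mp (by simpa using hstsucc)
  simpa using h

/-- Every element of a standard natural number (of the internal universe) is
standard. -/
lemma nat_elem_std {ν : M} (hνst : stP ν)
    (hνNat : NatIn mem (Internal mem stP) ν) : ∀ k, mem k ν → stP k := by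
  by_contra hcon
  push_neg at hcon
  obtain ⟨k₀, hk₀ν, hk₀nst⟩ := hcon
  obtain ⟨t, htst, htsucc⟩ := st_succ hH ν hνst
  -- D = {z ∈ t : some element of z is nonstandard}
  obtain ⟨D, hDch⟩ := hH.separation
    (fEx (.and (.mem (Fin.last 1) ((0 : Fin 1).castSucc)) (.not (.st (Fin.last 1)))))
    Fin.elim0 t
  have hDmem : ∀ z, mem z D ↔ (mem z t ∧ ∃ k, mem k z ∧ ¬ stP k) := by
    intro z
    rw [hDch z]
    refine and_congr Iff.rfl ?_
    simp only [eval_fEx, eval_and', eval_not', eval_mem', eval_st', Fin.snoc_last,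
      Fin.snoc_castSucc, fin_snoc_zero', TrueC, true_and]
  obtain ⟨Dstar, hDstar, hDstarch⟩ := hH.standardization D
  have hνI : Internal mem stP ν := st_internal hH hνst
  have hνt : mem ν t := (htsucc ν hνI).mpr (Or.inr rfl)
  have hνD : mem ν Dstar := (hDstarch ν hνst).mpr
    ((hDmem ν).mpr ⟨hνt, k₀, hk₀ν, hk₀nst⟩)
  obtain ⟨μ, hμst, hμD, hμmin⟩ := hH.zfc_st.foundation Dstar hDstar ⟨ν, hνst, hνD⟩
  have hμI : Internal mem stP μ := st_internal hH hμst
  have hμDmem := (hDmem μ).mp ((hDstarch μ hμst).mp hμD)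
  obtain ⟨hμt, k', hk'μ, hk'nst⟩ := hμDmem
  have hμcase : mem μ ν ∨ μ = ν := (htsucc μ hμI).mp hμt
  have hμNat : NatIn mem (Internal mem stP) μ := by
    rcases hμcase with h | rfl
    · exact nat_mem_nat hνNat hμI h
    · exact hνNat
  have hk'I : Internal mem stP k' := mem_internal hH hμI hk'μ
  have hμne : ¬ EmptyIn mem (Internal mem stP) μ := by
    intro hemp; exact hemp k' hk'I hk'μ
  have hμsucc : ∃ ρ, Internal mem stP ρ ∧ SuccIn mem (Internal mem stP) μ ρ := by
    rcases hμNat.2 μ hμI (Or.inl rfl) with h | h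
    · exact absurd h hμne
    · exact h
  obtain ⟨ρ, hρI, hρsucc⟩ := hμsucc
  -- transfer: some standard ρ' with μ = ρ' ∪ {ρ'}
  have htrans := (hH.transfer (succF ((0 : Fin 1).castSucc) (Fin.last 1))
    (isE_succF _ _) ![μ] (by intro i; fin_cases i <;> simpa)).mp
    ⟨ρ, hρI, by simpa using hρsucc⟩
  obtain ⟨ρ', hρ'st, hev⟩ := htrans
  have hρ'succ : SuccIn mem (Internal mem stP) μ ρ' := by simpa using hev
  have hρ'I : Internal mem stP ρ' := st_internal hH hρ'st
  have hk'ρ' : mem k' ρ' := by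
    rcases (hρ'succ k' hk'I).mp hk'μ with h | rfl
    · exact h
    · exact absurd hρ'st hk'nst
  have hρ'μ : mem ρ' μ := (hρ'succ ρ' hρ'I).mpr (Or.inr rfl)
  have hρ't : mem ρ' t := by
    rcases hμcase with h | rfl
    · have hρ'ν : mem ρ' ν := hνNat.1.1 μ hμI h ρ' hρ'I hρ'μ
      exact (htsucc ρ' hρ'I).mpr (Or.inl hρ'ν)
    · exact (htsucc ρ' hρ'I).mpr (Or.inl hρ'μ)
  have hρ'D : mem ρ' Dstar := (hDstarch ρ' hρ'st).mpr
    ((hDmem ρ').mpr ⟨hρ't, k', hk'ρ', hk'nst⟩)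
  exact hμmin ρ' hρ'st hρ'μ hρ'D

/-- Every element of a standard, internally finite set is standard. -/
lemma st_fin_elem_st {A : M} (hAst : stP A)
    (hfin : FiniteIn mem (Internal mem stP) A) : ∀ a, mem a A → stP a := by
  intro a haA
  have haI : Internal mem stP a := mem_st_internal hAst haA
  -- transfer to get a standard natural ν with A ≈ ν
  obtain ⟨ν₀, hν₀I, hν₀nat, hν₀eq⟩ := hfin
  have h1 := (hH.transfer
    (.and (natF (Fin.last 1)) (equinumF ((0 : Fin 1).castSucc) (Fin.last 1)))
    (by simp [isE_natF, isE_equinumF]) ![A] (by intro i; fin_cases i <;> simpa)).mp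
    ⟨ν₀, hν₀I, by simpa using ⟨hν₀nat, hν₀eq⟩⟩
  obtain ⟨ν, hνst, hνev⟩ := h1
  have hνNat : NatIn mem (Internal mem stP) ν := by
    have := hνev; simp at this; exact this.1
  have hνEq : EquinumIn mem (Internal mem stP) A ν := by
    have := hνev; simp at this; exact this.2
  -- transfer to get a standard bijection f
  obtain ⟨f₀, hf₀I, hf₀body⟩ := hνEq
  have h2 := (hH.transfer
    (equinumBodyF (Fin.last 2) ((0 : Fin 2).castSucc) ((1 : Fin 2).castSucc))
    (by simp [equinumBodyF, isE_funcOnMemF, isE_injOnF, isE_imgF]) ![A, ν]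
    (by intro i; fin_cases i <;> simpa)).mp
    ⟨f₀, hf₀I, by simpa using hf₀body⟩
  obtain ⟨f, hfst, hfev⟩ := h2
  have hfbody := hfev
  simp only [eval_equinumBodyF, Fin.snoc_last, Fin.snoc_castSucc, Matrix.cons_val_zero,
    Matrix.cons_val_one, Matrix.head_cons] at hfbody
  obtain ⟨hfFun, hfInj, hfImg⟩ := hfbody
  have hfI : Internal mem stP f := st_internal hH hfst
  -- the value w = f(a)
  obtain ⟨w, hwI, hfw⟩ := hfFun.2.1 a haI haA
  have hwν : mem w ν := (hfImg w hwI).mpr ⟨a, haI, haA, hfw⟩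
  have hwst : stP w := nat_elem_std hH hνst hνNat w hwν
  -- transfer to get a standard preimage
  have h3 := (hH.transfer
    (.and (.mem (Fin.last 3) ((0 : Fin 3).castSucc))
      (fvalF ((1 : Fin 3).castSucc) (Fin.last 3) ((2 : Fin 3).castSucc)))
    (by simp [isE_fvalF]) ![A, f, w] (by intro i; fin_cases i <;> simpa)).mp
    ⟨a, haI, by simpa using ⟨haA, hfw⟩⟩
  obtain ⟨a', ha'st, ha'ev⟩ := h3
  have ha' : mem a' A ∧ FValIn mem (Internal mem stP) f a' w := by simpa using ha'ev
  have : a = a' := hfInj a a' w haI (st_internal hH ha'st) hwI hfw ha'.2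
  rw [this]
  exact ha'st

end FinInsert

end HSTF


namespace HSTF

open StFormula

variable {M : Type u} {mem : M → M → Prop} {stP : M → Prop}

section Ideal

variable (hH : HSTModel mem stP)
include hH

lemma st_union_insert (A b : M) (hA : stP A) (hb : stP b) :
    ∃ u, stP u ∧ ∀ z, Internal mem stP z → (mem z u ↔ mem z A ∨ z = b) := by
  obtain ⟨sb, hsb, hsbch⟩ := hH.zfc_st.pair b b hb hb
  obtain ⟨q, hq, hqch⟩ := hH.zfc_st.pair A sb hA hsb
  obtain ⟨u, hu, huch⟩ := hH.zfc_st.union q hq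
  have hstch : ∀ z, stP z → (mem z u ↔ mem z A ∨ z = b) := by
    intro z hz; rw [huch z hz]
    constructor
    · rintro ⟨y, hy, hyq, hzy⟩
      rcases (hqch y hy).mp hyq with rfl | rfl
      · exact Or.inl hzy
      · exact Or.inr (((hsbch z hz).mp hzy).elim id id)
    · rintro (h | rfl)
      · exact ⟨A, hA, (hqch A hA).mpr (Or.inl rfl), h⟩
      · exact ⟨sb, hsb, (hqch sb hsb).mpr (Or.inr rfl), (hsbch z hz).mpr (Or.inl rfl)⟩
  refine ⟨u, hu, ?_⟩
  have h := (eval_st_iff_int hH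
    (.all (fIff (.mem (Fin.last 3) ((0 : Fin 3).castSucc))
      (fOr (.mem (Fin.last 3) ((1 : Fin 3).castSucc))
        (.eq (Fin.last 3) ((2 : Fin 3).castSucc)))))
    (by simp) ![u, A, b] (by intro i; fin_cases i; exacts [hu, hA, hb])).mp
    (by
      simp only [eval_all', eval_fIff, eval_fOr, eval_mem', eval_eq', Fin.snoc_last,
        Fin.snoc_castSucc]
      intro z hz
      simpa using hstch z hz)
  simp only [eval_all', eval_fIff, eval_fOr, eval_mem', eval_eq', Fin.snoc_last,
    Fin.snoc_castSucc] at h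
  intro z hz
  simpa using h z hz

/-- The member-of-`N ∪ {N}` set, with full characterization. -/
lemma mk_succ_H (N : M) : ∃ sN, ∀ z, mem z sN ↔ (mem z N ∨ z = N) := by
  obtain ⟨PN, hPN⟩ := hH.pairing N N
  obtain ⟨QN, hQN⟩ := hH.pairing N PN
  obtain ⟨sN, hsN⟩ := hH.union QN
  refine ⟨sN, fun z => ?_⟩
  rw [hsN z]
  constructor
  · rintro ⟨y, hyQ, hzy⟩
    rcases (hQN y trivial).mp hyQ with rfl | rfl
    · exact Or.inl hzy
    · exact Or.inr (((hPN z trivial).mp hzy).elim id id)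
  · rintro (h | rfl)
    · exact ⟨N, (hQN N trivial).mpr (Or.inl rfl), h⟩
    · exact ⟨PN, (hQN PN trivial).mpr (Or.inr rfl), (hPN z trivial).mpr (Or.inl rfl)⟩

/-- Intersection of two sets of the model, with full characterization. -/
lemma mk_inter_H (K N : M) : ∃ Z, ∀ z, mem z Z ↔ (mem z K ∧ mem z N) := by
  obtain ⟨Z, hZ⟩ := hH.separation (.mem (Fin.last 1) ((0 : Fin 1).castSucc)) ![N] K
  refine ⟨Z, fun z => ?_⟩
  rw [hZ z]
  refine and_congr Iff.rfl ?_
  simp only [eval_mem', Fin.snoc_last, Fin.snoc_castSucc, Matrix.cons_val_zero]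

/-- Well-foundedness of `N ∪ {N}` for an external natural `N`. -/
lemma wf_succ_H {N sN : M} (hN : NatIn mem TrueC N)
    (hsN : ∀ z, mem z sN ↔ (mem z N ∨ z = N)) :
    ∀ K, (∀ z, mem z K → mem z sN) → (∃ w, mem w K) →
      ∃ k, mem k K ∧ ∀ u, mem u k → ¬ mem u K := by
  intro K hKsub ⟨w₀, hw₀⟩
  obtain ⟨KN, hKN⟩ := mk_inter_H hH K N
  by_cases hKNne : ∃ w, mem w KN
  · obtain ⟨w, hw⟩ := hKNne
    obtain ⟨k, -, hkKN, hkmin⟩ := hN.1.2.2.2.2 KN trivial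
      (fun z _ hz => ((hKN z).mp hz).2) ⟨w, trivial, hw⟩
    have hkK : mem k K := ((hKN k).mp hkKN).1
    have hkN : mem k N := ((hKN k).mp hkKN).2
    refine ⟨k, hkK, fun u hu huK => ?_⟩
    have huN : mem u N := hN.1.1 k trivial hkN u trivial hu
    exact hkmin u trivial hu ((hKN u).mpr ⟨huK, huN⟩)
  · have hallN : ∀ w, mem w K → w = N := by
      intro w hw
      rcases (hsN w).mp (hKsub w hw) with h | h
      · exact absurd ⟨w, (hKN w).mpr ⟨hw, h⟩⟩ hKNne
      · exact h
    have hNK : mem N K := hallN w₀ hw₀ ▸ hw₀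
    refine ⟨N, hNK, fun u hu huK => ?_⟩
    have : u = N := hallN u huK
    subst this
    exact hN.1.2.2.2.1 u trivial hu hu

end Ideal

end HSTF


namespace HSTF

open StFormula

variable {M : Type u} {mem : M → M → Prop} {stP : M → Prop}


/-- Auxiliary formulas for the failure set in the proof of Bounded Idealization. -/
def QinnerF (n : ℕ) (φ : StFormula (n+2)) (ρQ : Fin (n+2) → Fin (n+9)) :
    StFormula (n+8) :=
  .all (fIff (.mem (Fin.last (n+8)) ((Fin.last (n+5)).castSucc.castSucc.castSucc))
    (.and (.mem (Fin.last (n+8))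
        ((Fin.last n).castSucc.castSucc.castSucc.castSucc.castSucc.castSucc.castSucc.castSucc))
      (relInt (φ.rename ρQ))))

def QexF (n : ℕ) (φ : StFormula (n+2)) (ρQ : Fin (n+2) → Fin (n+9)) :
    StFormula (n+7) :=
  fEx (.and (.st (Fin.last (n+7)))
    (.and (.mem (Fin.last (n+7)) ((Fin.last (n+4)).castSucc.castSucc.castSucc))
      (QinnerF n φ ρQ)))

def QbodyF (n : ℕ) (φ : StFormula (n+2)) (ρQ : Fin (n+2) → Fin (n+9)) :
    StFormula (n+5) :=
  .all (.all (fImp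
    (.mem ((Fin.last (n+5)).castSucc)
      ((Fin.last (n+1)).castSucc.castSucc.castSucc.castSucc.castSucc))
    (fImp (.mem (Fin.last (n+6)) ((Fin.last (n+3)).castSucc.castSucc.castSucc))
      (fImp (fvalF ((Fin.last (n+2)).castSucc.castSucc.castSucc.castSucc)
          ((Fin.last (n+5)).castSucc) (Fin.last (n+6)))
        (QexF n φ ρQ)))))

def QF (n : ℕ) (φ : StFormula (n+2)) (ρQ : Fin (n+2) → Fin (n+9)) :
    StFormula (n+4) :=
  .not (fEx (.and (.st (Fin.last (n+4)))
    (.and (relInt (finF (Fin.last (n+4)))) (QbodyF n φ ρQ))))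

section Ideal2

variable (hH : HSTModel mem stP)
include hH

/-- The internal set `X_b = {x ∈ X : φ(x, b)}`, with a characterization for all
sets of the model. -/
lemma exists_Xb {n} (φ : StFormula (n + 2)) (hφ : φ.IsEpsilon)
    (val : Fin n → M) (hval : ∀ i, Internal mem stP (val i)) (X : M) (hX : stP X)
    (b : M) (hb : Internal mem stP b) :
    ∃ y, Internal mem stP y ∧ ∀ x, mem x y ↔
      (mem x X ∧ EvalIn mem stP (Internal mem stP) φ (Fin.snoc (Fin.snoc val x) b)) := by
  set ρswap : Fin (n+2) → Fin (n+2) :=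
    Fin.snoc (Fin.snoc (fun i : Fin n => i.castSucc.castSucc) (Fin.last (n+1)))
      ((Fin.last n).castSucc) with hρswap
  have hcomp : ∀ (x : M),
      ((Fin.snoc (Fin.snoc val b) x : Fin (n+2) → M) ∘ ρswap)
        = Fin.snoc (Fin.snoc val x) b := by
    intro x; funext i
    refine Fin.lastCases ?_ (fun j => ?_) i
    · simp [hρswap, Fin.snoc_last, Fin.snoc_castSucc]
    · refine Fin.lastCases ?_ (fun j' => ?_) j <;>
        simp [hρswap, Fin.snoc_last, Fin.snoc_castSucc]
  obtain ⟨y, hyI, hych⟩ := separation_int hH (φ.rename ρswap)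
    ((isE_rename _ _).mpr hφ) (Fin.snoc val b)
    (by intro i; refine Fin.lastCases ?_ (fun j => ?_) i <;> simp [hb, hval]) X
    (st_internal hH hX)
  refine ⟨y, hyI, fun x => ?_⟩
  constructor
  · intro hxy
    have hxI : Internal mem stP x := mem_internal hH hyI hxy
    have h := (hych x hxI).mp hxy
    rw [eval_rename, hcomp x] at h
    exact ⟨h.1, (eval_eps_irrel φ hφ _).mp h.2⟩
  · rintro ⟨hxX, hev⟩
    have hxI : Internal mem stP x := mem_st_internal hX hxX
    refine (hych x hxI).mpr ⟨hxX, ?_⟩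
    rw [eval_rename, hcomp x]
    exact (eval_eps_irrel φ hφ _).mp hev

/-- Forward direction of Bounded Idealization. -/
lemma bdd_ideal_forward {n} (φ : StFormula (n + 2)) (hφ : φ.IsEpsilon)
    (val : Fin n → M) (hval : ∀ i, Internal mem stP (val i)) (X : M) (hX : stP X)
    (hL : ∀ A, stP A → FiniteIn mem (Internal mem stP) A →
      ∃ x, Internal mem stP x ∧ mem x X ∧ ∀ a, Internal mem stP a → mem a A →
        EvalIn mem stP (Internal mem stP) φ (Fin.snoc (Fin.snoc val x) a)) :
    ∃ x, Internal mem stP x ∧ mem x X ∧ ∀ a, stP a →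
      EvalIn mem stP (Internal mem stP) φ (Fin.snoc (Fin.snoc val x) a) := by
  by_contra hR
  push_neg at hR
  -- notation
  set ψ : M → M → Prop :=
    fun x b => EvalIn mem stP (Internal mem stP) φ (Fin.snoc (Fin.snoc val x) b) with hψdef
  -- a first internal element of X, from the empty set
  obtain ⟨e, hest, heemp⟩ := exists_st_empty hH
  have hefin : FiniteIn mem (Internal mem stP) e :=
    fin_of_empty (st_internal hH hest) (fun z hz h => heemp z trivial h)
  obtain ⟨x₀, hx₀I, hx₀X, -⟩ := hL e hest hefin
  -- collection: a standard set Bs of counterexample indices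
  obtain ⟨B, hBcol⟩ := hH.collection
    (.and (.st (Fin.last (n+1))) (.not (relInt φ))) val X
  obtain ⟨Bs, hBsst, hBsch⟩ := hH.standardization B
  have hdagger : ∀ x, mem x X → ∃ b, stP b ∧ mem b Bs ∧ ¬ ψ x b := by
    intro x hxX
    have hxI : Internal mem stP x := mem_st_internal hX hxX
    obtain ⟨a, hast, hna⟩ := hR x hxI hxX
    have hex : ∃ b, EvalIn mem stP TrueC
        (.and (.st (Fin.last (n+1))) (.not (relInt φ))) (Fin.snoc (Fin.snoc val x) b) := by
      refine ⟨a, ?_⟩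
      simp only [eval_and', eval_not', eval_st', Fin.snoc_last, eval_relInt]
      exact ⟨hast, hna⟩
    obtain ⟨b, hbB, hbev⟩ := hBcol x hxX hex
    simp only [eval_and', eval_not', eval_st', Fin.snoc_last, eval_relInt] at hbev
    exact ⟨b, hbev.1, (hBsch b hbev.1).mpr hbB, hbev.2⟩
  -- internal power set of X
  obtain ⟨P, hPI, hPch⟩ := power_int hH X (st_internal hH hX)
  have hXbP : ∀ y, Internal mem stP y →
      (∀ x, mem x y ↔ (mem x X ∧ ψ x y)) → True := fun _ _ _ => trivial
  -- the set F of all X_b for standard b ∈ Bs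
  set vals : Fin (n+2) → M := Fin.snoc (Fin.snoc val X) Bs with hvals
  set ρF : Fin (n+2) → Fin (n+5) :=
    Fin.snoc (Fin.snoc
      (fun i : Fin n => i.castSucc.castSucc.castSucc.castSucc.castSucc)
      (Fin.last (n+4))) ((Fin.last (n+3)).castSucc) with hρF
  have hcompF : ∀ (y b x : M),
      ((Fin.snoc (Fin.snoc (Fin.snoc vals y) b) x : Fin (n+5) → M) ∘ ρF)
        = Fin.snoc (Fin.snoc val x) b := by
    intro y b x; funext i
    refine Fin.lastCases ?_ (fun j => ?_) i
    · simp [hρF, Fin.snoc_last, Fin.snoc_castSucc]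
    · refine Fin.lastCases ?_ (fun j' => ?_) j <;>
        simp [hρF, hvals, Fin.snoc_last, Fin.snoc_castSucc]
  obtain ⟨F, hFch0⟩ := hH.separation
    (fEx (.and (.st (Fin.last (n+3)))
      (.and (.mem (Fin.last (n+3)) ((Fin.last (n+1)).castSucc.castSucc))
        (.all (fIff (.mem (Fin.last (n+4)) ((Fin.last (n+2)).castSucc.castSucc))
          (.and (.mem (Fin.last (n+4))
              ((Fin.last n).castSucc.castSucc.castSucc.castSucc))
            (relInt (φ.rename ρF)))))))) vals P
  have hFch : ∀ y, mem y F ↔ (mem y P ∧ ∃ b, stP b ∧ mem b Bs ∧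
      ∀ x, mem x y ↔ (mem x X ∧ ψ x b)) := by
    intro y
    rw [hFch0 y]
    refine and_congr Iff.rfl ?_
    simp only [eval_fEx, eval_and', eval_all', eval_fIff, eval_st', eval_mem',
      eval_relInt, eval_rename, Fin.snoc_last, Fin.snoc_castSucc, hcompF,
      TrueC, true_and, true_implies, hvals, hψdef]
    simp only [← hvals, hcompF]
  -- the indexing function f : b ↦ X_b as a set of pairs, via Replacement
  set ρR : Fin (n+2) → Fin (n+5) :=
    Fin.snoc (Fin.snoc
      (fun i : Fin n => i.castSucc.castSucc.castSucc.castSucc.castSucc)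
      (Fin.last (n+4))) ((Fin.last (n+1)).castSucc.castSucc.castSucc) with hρR
  have hcompR : ∀ (a z y x : M),
      ((Fin.snoc (Fin.snoc (Fin.snoc (Fin.snoc (Fin.snoc val X) a) z) y) x :
        Fin (n+5) → M) ∘ ρR) = Fin.snoc (Fin.snoc val x) a := by
    intro a z y x; funext i
    refine Fin.lastCases ?_ (fun j => ?_) i
    · simp [hρR, Fin.snoc_last, Fin.snoc_castSucc]
    · refine Fin.lastCases ?_ (fun j' => ?_) j <;>
        simp [hρR, Fin.snoc_last, Fin.snoc_castSucc]
  have hrepfun : ∀ a b b', EvalIn mem stP TrueC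
      (.and (.st ((Fin.last (n+1)).castSucc))
        (fEx (.and (opairF ((Fin.last (n+2)).castSucc)
            ((Fin.last (n+1)).castSucc.castSucc) (Fin.last (n+3)))
          (.all (fIff (.mem (Fin.last (n+4)) ((Fin.last (n+3)).castSucc))
            (.and (.mem (Fin.last (n+4))
                ((Fin.last n).castSucc.castSucc.castSucc.castSucc))
              (relInt (φ.rename ρR))))))))
        (Fin.snoc (Fin.snoc (Fin.snoc val X) a) b) →
      EvalIn mem stP TrueC
      (.and (.st ((Fin.last (n+1)).castSucc))
        (fEx (.and (opairF ((Fin.last (n+2)).castSucc)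
            ((Fin.last (n+1)).castSucc.castSucc) (Fin.last (n+3)))
          (.all (fIff (.mem (Fin.last (n+4)) ((Fin.last (n+3)).castSucc))
            (.and (.mem (Fin.last (n+4))
                ((Fin.last n).castSucc.castSucc.castSucc.castSucc))
              (relInt (φ.rename ρR))))))))
        (Fin.snoc (Fin.snoc (Fin.snoc val X) a) b') → b = b' := by
    intro a b b' h1 h2
    simp only [eval_and', eval_fEx, eval_all', eval_fIff, eval_st', eval_mem',
      eval_opairF, eval_relInt, eval_rename, Fin.snoc_last, Fin.snoc_castSucc, hcompR,
      TrueC, true_and, true_implies] at h1 h2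
    obtain ⟨hast, y, hopy, hychar⟩ := h1
    obtain ⟨-, y', hopy', hychar'⟩ := h2
    have hyy : y = y' := by
      refine hH.ext y y' fun x => ?_
      rw [hychar x, hychar' x]
    subst hyy
    exact opair_ext hH hopy hopy'
  obtain ⟨fset, hfsetch⟩ := hH.replacement
    (.and (.st ((Fin.last (n+1)).castSucc))
      (fEx (.and (opairF ((Fin.last (n+2)).castSucc)
          ((Fin.last (n+1)).castSucc.castSucc) (Fin.last (n+3)))
        (.all (fIff (.mem (Fin.last (n+4)) ((Fin.last (n+3)).castSucc))
          (.and (.mem (Fin.last (n+4))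
              ((Fin.last n).castSucc.castSucc.castSucc.castSucc))
            (relInt (φ.rename ρR))))))))
    (Fin.snoc val X) Bs hrepfun
  have hfmem : ∀ z, mem z fset ↔ ∃ a, mem a Bs ∧ stP a ∧ ∃ y,
      OPairIn mem TrueC z a y ∧ ∀ x, mem x y ↔ (mem x X ∧ ψ x a) := by
    intro z
    rw [hfsetch z]
    refine exists_congr fun a => and_congr Iff.rfl ?_
    simp only [eval_and', eval_fEx, eval_all', eval_fIff, eval_st', eval_mem',
      eval_opairF, eval_relInt, eval_rename, Fin.snoc_last, Fin.snoc_castSucc, hcompR,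
      TrueC, true_and, true_implies, hψdef]
  have hfval : ∀ a y, FValIn mem TrueC fset a y ↔ (stP a ∧ mem a Bs ∧
      ∀ x, mem x y ↔ (mem x X ∧ ψ x a)) := by
    intro a y
    constructor
    · rintro ⟨p, -, hpf, hop⟩
      obtain ⟨a', ha'Bs, ha'st, y', hop', hchar'⟩ := (hfmem p).mp hpf
      obtain ⟨rfl, rfl⟩ := opair_inj trivial trivial trivial trivial hop hop'
      exact ⟨ha'st, ha'Bs, hchar'⟩
    · rintro ⟨hast, haBs, hchar⟩
      obtain ⟨p, hop⟩ := mk_opair hH a y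
      exact ⟨p, trivial, (hfmem p).mpr ⟨a, haBs, hast, y, hop, hchar⟩, hop⟩
  -- each X_b is unique and internal
  have hXbint : ∀ a y, (∀ x, mem x y ↔ (mem x X ∧ ψ x a)) → Internal mem stP a →
      Internal mem stP y := by
    intro a y hchar haI
    obtain ⟨y', hy'I, hy'ch⟩ := exists_Xb hH φ hφ val hval X hX a haI
    have : y = y' := hH.ext y y' fun x => by rw [hchar x, hy'ch x]
    rw [this]; exact hy'I
  have hXbmemP : ∀ a y, (∀ x, mem x y ↔ (mem x X ∧ ψ x a)) → Internal mem stP y →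
      mem y P := by
    intro a y hchar hyI
    refine (hPch y hyI).mpr ?_
    intro x hxI hxy
    exact ((hchar x).mp hxy).1
  -- F has standard size
  have hssize : SSize mem stP F := by
    refine ⟨Bs, fset, hBsst, ⟨?_, ?_, ?_⟩, ?_⟩
    · intro p _ hpf
      obtain ⟨a, haBs, hast, y, hop, hchar⟩ := (hfmem p).mp hpf
      exact ⟨a, y, trivial, trivial, ⟨hast, haBs⟩, hop⟩
    · rintro a - ⟨hast, haBs⟩
      obtain ⟨y, hyI, hychar⟩ := exists_Xb hH φ hφ val hval X hX a (st_internal hH hast)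
      exact ⟨y, trivial, (hfval a y).mpr ⟨hast, haBs, hychar⟩⟩
    · intro a y y' _ _ _ h1 h2
      obtain ⟨-, -, hchar⟩ := (hfval a y).mp h1
      obtain ⟨-, -, hchar'⟩ := (hfval a y').mp h2
      exact hH.ext y y' fun x => by rw [hchar x, hchar' x]
    · intro y
      constructor
      · intro hyF
        obtain ⟨hyP, b, hbst, hbBs, hchar⟩ := (hFch y).mp hyF
        exact ⟨b, hbst, hbBs, (hfval b y).mpr ⟨hbst, hbBs, hchar⟩⟩
      · rintro ⟨a, hast, haBs, hfv⟩
        obtain ⟨-, -, hchar⟩ := (hfval a y).mp hfv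
        have hyI : Internal mem stP y := hXbint a y hchar (st_internal hH hast)
        exact (hFch y).mpr ⟨hXbmemP a y hchar hyI, a, hast, haBs, hchar⟩
  have hFint : ∀ Y, mem Y F → Internal mem stP Y := by
    intro Y hYF
    exact mem_internal hH hPI ((hFch Y).mp hYF).1
  -- finite intersection property for F
  have hFIP : ∀ X', (∃ Y, mem Y X') → SubIn mem TrueC X' F → FiniteIn mem TrueC X' →
      ∃ z, ∀ Y, mem Y X' → mem z Y := by
    intro X' hne hsub hfin
    obtain ⟨N, -, hNnat, g, -, hgFun, hgInj, hgImg⟩ := hfin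
    obtain ⟨sN, hsNch⟩ := mk_succ_H hH N
    set vQ : Fin (n+3) → M := Fin.snoc (Fin.snoc (Fin.snoc val X) X') g with hvQ
    set ρQ : Fin (n+2) → Fin (n+9) := Fin.snoc (Fin.snoc
      (fun i : Fin n =>
        i.castSucc.castSucc.castSucc.castSucc.castSucc.castSucc.castSucc.castSucc.castSucc)
      (Fin.last (n+8))) ((Fin.last (n+7)).castSucc) with hρQ
    have hcompQ : ∀ (k A y j b x : M),
        ((Fin.snoc (Fin.snoc (Fin.snoc (Fin.snoc (Fin.snoc (Fin.snoc vQ k) A) y) j) b) x :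
          Fin (n+9) → M) ∘ ρQ) = Fin.snoc (Fin.snoc val x) b := by
      intro k A y j b x; funext i
      refine Fin.lastCases ?_ (fun i1 => ?_) i
      · simp [hρQ, Fin.snoc_last, Fin.snoc_castSucc]
      · refine Fin.lastCases ?_ (fun i2 => ?_) i1 <;>
          simp [hρQ, hvQ, Fin.snoc_last, Fin.snoc_castSucc]
    obtain ⟨K, hKch0⟩ := hH.separation (QF n φ ρQ) vQ sN
    set Q : M → Prop := fun k => ∃ A, stP A ∧ (FiniteIn mem (Internal mem stP) A ∧
      ∀ y j, mem y X' → mem j k → FValIn mem TrueC g y j →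
        ∃ b, stP b ∧ (mem b A ∧ ∀ x, mem x y ↔ (mem x X ∧ ψ x b))) with hQ
    have hKch : ∀ k, mem k K ↔ (mem k sN ∧ ¬ Q k) := by
      intro k
      rw [hKch0 k]
      refine and_congr Iff.rfl ?_
      rw [hQ]
      simp only [QF, QbodyF, QexF, QinnerF, eval_not', eval_fEx, eval_and', eval_all',
        eval_fImp, eval_fIff, eval_st', eval_mem', eval_fvalF, eval_finF, eval_relInt,
        eval_rename, Fin.snoc_last, Fin.snoc_castSucc, hcompQ, hvQ, TrueC, true_and,
        true_implies, hψdef]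
      simp only [← hvQ, hcompQ]
    have hQall : ∀ k, mem k sN → Q k := by
      by_contra hcon
      push_neg at hcon
      obtain ⟨k₁, hk₁sN, hk₁⟩ := hcon
      have hKne : ∃ w, mem w K := ⟨k₁, (hKch k₁).mpr ⟨hk₁sN, hk₁⟩⟩
      obtain ⟨k, hkK, hkmin⟩ := wf_succ_H hH hNnat hsNch K
        (fun z hz => ((hKch z).mp hz).1) hKne
      obtain ⟨hksN, hnQk⟩ := (hKch k).mp hkK
      apply hnQk
      by_cases hkemp : ∃ j, mem j k
      · obtain ⟨j₀, hj₀⟩ := hkemp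
        have hkcase : k = N ∨ mem k N := by
          rcases (hsNch k).mp hksN with h | h
          · exact Or.inr h
          · exact Or.inl h
        have hksucc : ∃ j, SuccIn mem TrueC k j := by
          rcases hNnat.2 k trivial hkcase with hemp | ⟨j, -, hsucc⟩
          · exact absurd hj₀ (hemp j₀ trivial)
          · exact ⟨j, hsucc⟩
        obtain ⟨j, hjsucc⟩ := hksucc
        have hjk : mem j k := (hjsucc j trivial).mpr (Or.inr rfl)
        have hjN : mem j N := by
          rcases hkcase with rfl | h
          · exact hjk
          · exact hNnat.1.1 k trivial h j trivial hjk
        have hjsN : mem j sN := (hsNch j).mpr (Or.inl hjN)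
        have hQj : Q j := by
          by_contra hq
          exact hkmin j hjk ((hKch j).mpr ⟨hjsN, hq⟩)
        obtain ⟨Aj, hAjst, hAjfin, hAjcov⟩ := hQj
        obtain ⟨yj, -, hyjX', hgyj⟩ := (hgImg j trivial).mp hjN
        have hyjF : mem yj F := hsub yj trivial hyjX'
        obtain ⟨-, bj, hbjst, hbjBs, hbjchar⟩ := (hFch yj).mp hyjF
        obtain ⟨Ak, hAkst, hAkch⟩ := st_union_insert hH Aj bj hAjst hbjst
        have hAkfin : FiniteIn mem (Internal mem stP) Ak :=
          fin_insert hH (st_internal hH hAjst) (st_internal hH hbjst)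
            (st_internal hH hAkst) hAjfin hAkch
        refine ⟨Ak, hAkst, hAkfin, ?_⟩
        intro y j' hyX' hj'k hgval
        rcases (hjsucc j' trivial).mp hj'k with hj'j | rfl
        · obtain ⟨b, hbst, hbAj, hbchar⟩ := hAjcov y j' hyX' hj'j hgval
          exact ⟨b, hbst, (hAkch b (st_internal hH hbst)).mpr (Or.inl hbAj), hbchar⟩
        · have hyy : y = yj := hgInj y yj j' trivial trivial trivial hgval hgyj
          subst hyy
          exact ⟨bj, hbjst, (hAkch bj (st_internal hH hbjst)).mpr (Or.inr rfl), hbjchar⟩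
      · push_neg at hkemp
        exact ⟨e, hest, hefin, fun y j hy hj => absurd hj (hkemp j)⟩
    have hQN : Q N := hQall N ((hsNch N).mpr (Or.inr rfl))
    obtain ⟨A, hAst, hAfin, hAcov⟩ := hQN
    obtain ⟨x, hxI, hxX, hx⟩ := hL A hAst hAfin
    refine ⟨x, ?_⟩
    intro Y hYX'
    obtain ⟨j, -, hgYj⟩ := hgFun.2.1 Y trivial hYX'
    have hjN : mem j N := (hgImg j trivial).mpr ⟨Y, trivial, hYX', hgYj⟩
    obtain ⟨b, hbst, hbA, hbchar⟩ := hAcov Y j hYX' hjN hgYj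
    exact (hbchar x).mpr ⟨hxX, hx b (st_internal hH hbst) hbA⟩
  -- saturation and the contradiction
  obtain ⟨z, hz⟩ := hH.saturation F hssize hFint hFIP
  obtain ⟨b₀, hb₀st, hb₀Bs, -⟩ := hdagger x₀ hx₀X
  obtain ⟨Y₀, hY₀I, hY₀ch⟩ := exists_Xb hH φ hφ val hval X hX b₀ (st_internal hH hb₀st)
  have hY₀F : mem Y₀ F :=
    (hFch Y₀).mpr ⟨hXbmemP b₀ Y₀ hY₀ch hY₀I, b₀, hb₀st, hb₀Bs, hY₀ch⟩
  have hzX : mem z X := ((hY₀ch z).mp (hz Y₀ hY₀F)).1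
  obtain ⟨b₁, hb₁st, hb₁Bs, hnψ⟩ := hdagger z hzX
  obtain ⟨Y₁, hY₁I, hY₁ch⟩ := exists_Xb hH φ hφ val hval X hX b₁ (st_internal hH hb₁st)
  have hY₁F : mem Y₁ F :=
    (hFch Y₁).mpr ⟨hXbmemP b₁ Y₁ hY₁ch hY₁I, b₁, hb₁st, hb₁Bs, hY₁ch⟩
  exact hnψ ((hY₁ch z).mp (hz Y₁ hY₁F)).2


end Ideal2

end HSTF


namespace HSTF

variable {M : Type u} {mem : M → M → Prop} {stP : M → Prop}

section Final

variable (hH : HSTModel mem stP)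
include hH

lemma bdd_idealization_int {n} (φ : StFormula (n + 2)) (hφ : φ.IsEpsilon)
    (val : Fin n → M) (hval : ∀ i, Internal mem stP (val i)) (X : M) (hX : stP X) :
    ((∀ A, stP A → FiniteIn mem (Internal mem stP) A →
        ∃ x, Internal mem stP x ∧ mem x X ∧ ∀ a, Internal mem stP a → mem a A →
          EvalIn mem stP (Internal mem stP) φ (Fin.snoc (Fin.snoc val x) a)) ↔
     (∃ x, Internal mem stP x ∧ mem x X ∧ ∀ a, stP a →
        EvalIn mem stP (Internal mem stP) φ (Fin.snoc (Fin.snoc val x) a))) := by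
  constructor
  · exact bdd_ideal_forward hH φ hφ val hval X hX
  · rintro ⟨x, hxI, hxX, hx⟩ A hAst hAfin
    exact ⟨x, hxI, hxX, fun a haI haA => hx a (st_fin_elem_st hH hAst hAfin a haA)⟩

lemma standardization_int {n} (φ : StFormula (n + 1)) (val : Fin n → M)
    (X : M) (hX : stP X) :
    ∃ Y, stP Y ∧ ∀ x, stP x → (mem x Y ↔ (mem x X ∧
      EvalIn mem stP (Internal mem stP) φ (Fin.snoc val x))) := by
  obtain ⟨Z, hZch⟩ := hH.separation (relInt φ) val X
  obtain ⟨Y, hYst, hYch⟩ := hH.standardization Z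
  refine ⟨Y, hYst, fun x hx => ?_⟩
  rw [hYch x hx, hZch x, eval_relInt]

end Final

end HSTF

namespace HSTF

/-- In any model of HST, the class of all internal sets,
with the membership and standardness of the model, is a model of bounded set
theory BST. -/
theorem internal_universe_models_bst {M : Type u}
    (mem : M → M → Prop) (stP : M → Prop) (hH : HSTModel mem stP) :
    BSTModelIn mem stP (Internal mem stP) :=
  { zfc := zfc_int hH
    st_sub := fun _ hx => st_internal hH hx
    bdd_idealization := fun φ hφ val hval X hX =>
      bdd_idealization_int hH φ hφ val hval X hX
    standardization := fun φ val _ X hX => standardization_int hH φ val X hX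
    transfer := fun φ hφ val hval h => (hH.transfer φ hφ val hval).mp h
    boundedness := fun _ hx => hx }

end HSTF
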